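/- arXiv:math/0011031 — 7 statements merged into one kernel-verified Lean document; each statement's English description precedes it below -/
import Mathlib

section
/- Let X be a real or complex Banach space and let φ : I₁(X) → I₁(X) be a bijective map such that tr(φ(P)φ(Q)) = tr(PQ) for all P, Q ∈ I₁(X). Then either there exists a bijective bounded linear operator A : X → X such that φ(P) = A P A⁻¹ for all P ∈ I₁(X), or there exists a bijective bounded linear operator C : X′ → X such that φ(P) = C P′ C⁻¹ for all P ∈ I₁(X), where P′ : X′ → X′ denotes the Banach-space adjoint (dual map) of P. -/
open ContinuousLinearMap

/-- The set of rank-one idempotents on a Banach space `X`: operators of the form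
`x ⊗ f` with `f x = 1`, i.e. `y ↦ f y • x`. -/
def rankOneIdempotents (𝕜 X : Type*) [RCLike 𝕜] [NormedAddCommGroup X]
    [NormedSpace 𝕜 X] : Set (X →L[𝕜] X) :=
  {P | ∃ (x : X) (f : X →L[𝕜] 𝕜), f x = 1 ∧ P = f.smulRight x}

/-- The Banach-space adjoint (dual map) of an operator `P : X →L[𝕜] X`,
as an operator on the topological dual `X →L[𝕜] 𝕜`, given by `f ↦ f ∘ P`. -/
noncomputable def banachDualMap {𝕜 X : Type*} [RCLike 𝕜] [NormedAddCommGroup X]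
    [NormedSpace 𝕜 X] (P : X →L[𝕜] X) : (X →L[𝕜] 𝕜) →L[𝕜] (X →L[𝕜] 𝕜) :=
  (ContinuousLinearMap.compL 𝕜 X X 𝕜).flip P



open ContinuousLinearMap

namespace WignerAux

variable {𝕜 X : Type*} [RCLike 𝕜] [NormedAddCommGroup X] [NormedSpace 𝕜 X]

lemma sep {v : X} (hv : v ≠ 0) : ∃ f : X →L[𝕜] 𝕜, f v = 1 :=
  SeparatingDual.exists_eq_one hv

lemma comp_sr (p q : X →L[𝕜] 𝕜) (u v : X) :
    (p.smulRight u).comp (q.smulRight v) = (p v) • (q.smulRight u) := by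
  ext z
  simp only [ContinuousLinearMap.coe_comp', Function.comp_apply, smulRight_apply, map_smul,
    smul_eq_mul, ContinuousLinearMap.coe_smul', Pi.smul_apply]
  rw [smul_smul, smul_smul, mul_comm]

lemma sr_add_vec (f : X →L[𝕜] 𝕜) (x y : X) :
    f.smulRight (x + y) = f.smulRight x + f.smulRight y := by
  ext z; simp [smul_add]

lemma sr_smul_vec (f : X →L[𝕜] 𝕜) (c : 𝕜) (x : X) :
    f.smulRight (c • x) = c • f.smulRight x := by
  ext z
  simp only [smulRight_apply, ContinuousLinearMap.coe_smul', Pi.smul_apply]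
  rw [smul_comm]

lemma sr_sub_vec (f : X →L[𝕜] 𝕜) (x y : X) :
    f.smulRight (x - y) = f.smulRight x - f.smulRight y := by
  ext z; simp [smul_sub]

lemma sr_sub_fun (f g : X →L[𝕜] 𝕜) (x : X) :
    (f - g).smulRight x = f.smulRight x - g.smulRight x := by
  ext z; simp [sub_smul]

lemma sr_add_fun (f g : X →L[𝕜] 𝕜) (x : X) :
    (f + g).smulRight x = f.smulRight x + g.smulRight x := by
  ext z; simp [add_smul]

lemma sr_smul_fun (c : 𝕜) (f : X →L[𝕜] 𝕜) (x : X) :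
    (c • f).smulRight x = c • f.smulRight x := by
  ext z
  simp only [smulRight_apply, ContinuousLinearMap.coe_smul', Pi.smul_apply, smul_eq_mul]
  rw [smul_smul]

lemma comp_fun_sr (f1 p : X →L[𝕜] 𝕜) (u : X) :
    f1.comp (p.smulRight u) = (f1 u) • p := by
  ext z; simp [mul_comm]

lemma sr_smul_switch (c : 𝕜) (f : X →L[𝕜] 𝕜) (x : X) :
    (c • f).smulRight x = f.smulRight (c • x) := by
  rw [sr_smul_fun, sr_smul_vec]

lemma mem_I1 {x : X} {f : X →L[𝕜] 𝕜} (h : f x = 1) :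
    f.smulRight x ∈ rankOneIdempotents 𝕜 X := ⟨x, f, h, rfl⟩

lemma I1_ne_zero {W : X →L[𝕜] X} (hW : W ∈ rankOneIdempotents 𝕜 X) : W ≠ 0 := by
  obtain ⟨x, f, hfx, rfl⟩ := hW
  intro h
  have hx : x ≠ 0 := fun hx0 => by simp [hx0] at hfx
  have := congrArg (fun (T : X →L[𝕜] X) => T x) h
  simp [hfx] at this
  exact hx this

/-- any representation of a rank-one idempotent has "coefficient" 1 -/
lemma rep_coeff {W : X →L[𝕜] X} (hW : W ∈ rankOneIdempotents 𝕜 X)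
    {q : X →L[𝕜] 𝕜} {v : X} (h : W = q.smulRight v) : q v = 1 := by
  have hWW : W.comp W = W := by
    obtain ⟨x, f, hfx, rfl⟩ := hW
    rw [comp_sr, hfx, one_smul]
  rw [h, comp_sr] at hWW
  have hz : (q v - 1) • (q.smulRight v) = 0 := by
    rw [sub_smul, one_smul, hWW, sub_self]
  rcases smul_eq_zero.1 hz with h1 | h2
  · exact sub_eq_zero.1 h1
  · exact absurd (h.trans h2) (I1_ne_zero hW)

end WignerAux


namespace WignerAux

variable {𝕜 X : Type*} [RCLike 𝕜] [NormedAddCommGroup X] [NormedSpace 𝕜 X]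

/-- nondegeneracy of the trace pairing against rank-one idempotents -/
lemma nondeg {D : X →L[𝕜] X}
    (h : ∀ (y : X) (g : X →L[𝕜] 𝕜), g y = 1 → g (D y) = 0) : D = 0 := by
  have h' : ∀ (y : X) (g : X →L[𝕜] 𝕜), g (D y) = 0 := by
    intro y g
    by_cases hy : y = 0
    · simp [hy]
    obtain ⟨h1, hh1⟩ := sep (𝕜 := 𝕜) hy
    have e1 := h y h1 hh1
    have e2 := h y (g + (1 - g y) • h1) (by simp [hh1])
    simp only [ContinuousLinearMap.add_apply, ContinuousLinearMap.coe_smul', Pi.smul_apply,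
      smul_eq_mul, e1, mul_zero, add_zero] at e2
    exact e2
  ext y
  show D y = 0
  by_contra hDy
  obtain ⟨g, hg⟩ := sep (𝕜 := 𝕜) hDy
  rw [h' y g] at hg
  exact one_ne_zero hg.symm

section Phi

variable (φ : (X →L[𝕜] X) → (X →L[𝕜] X))

/-- the trace-preservation hypothesis -/
def Htr : Prop := ∀ (x y : X) (f g : X →L[𝕜] 𝕜) (x' y' : X) (f' g' : X →L[𝕜] 𝕜),
  f x = 1 → g y = 1 → f' x' = 1 → g' y' = 1 →
  φ (f.smulRight x) = f'.smulRight x' → φ (g.smulRight y) = g'.smulRight y' →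
  f' y' * g' x' = f y * g x

variable {φ}
variable (hbij : Set.BijOn φ (rankOneIdempotents 𝕜 X) (rankOneIdempotents 𝕜 X))
variable (htr : Htr φ)

include hbij htr

/-- trace transfer: pairing `φ P` against a represented image `φ R = g'.smulRight y'`
equals pairing `P` against `R = g.smulRight y`. -/
lemma key {x : X} {f : X →L[𝕜] 𝕜} (hfx : f x = 1)
    {y : X} {g : X →L[𝕜] 𝕜} (hgy : g y = 1)
    {y' : X} {g' : X →L[𝕜] 𝕜} (hg'y' : g' y' = 1)
    (hW : φ (g.smulRight y) = g'.smulRight y') :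
    g' ((φ (f.smulRight x)) y') = g ((f.smulRight x) y) := by
  obtain ⟨x', f', hf'x', hrep⟩ := hbij.mapsTo (mem_I1 hfx)
  have := htr x y f g x' y' f' g' hfx hgy hf'x' hg'y' hrep hW
  rw [hrep]
  simp only [smulRight_apply, map_smul, smul_eq_mul]
  rw [this]

/-- four-term linearity instances transfer through φ -/
lemma comb4 {x1 x2 x3 x4 : X} {f1 f2 f3 f4 : X →L[𝕜] 𝕜}
    (h1 : f1 x1 = 1) (h2 : f2 x2 = 1) (h3 : f3 x3 = 1) (h4 : f4 x4 = 1)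
    (c1 c2 c3 c4 : 𝕜)
    (heq : c1 • f1.smulRight x1 + c2 • f2.smulRight x2
         = c3 • f3.smulRight x3 + c4 • f4.smulRight x4) :
    c1 • φ (f1.smulRight x1) + c2 • φ (f2.smulRight x2)
      = c3 • φ (f3.smulRight x3) + c4 • φ (f4.smulRight x4) := by
  have main : ∀ (y' : X) (g' : X →L[𝕜] 𝕜), g' y' = 1 →
      g' (((c1 • φ (f1.smulRight x1) + c2 • φ (f2.smulRight x2))
        - (c3 • φ (f3.smulRight x3) + c4 • φ (f4.smulRight x4))) y') = 0 := by
    intro y' g' hg'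
    obtain ⟨R, hR, hφR⟩ := hbij.surjOn (mem_I1 hg')
    obtain ⟨z, h, hhz, rfl⟩ := hR
    have e1 := key hbij htr h1 hhz hg' hφR
    have e2 := key hbij htr h2 hhz hg' hφR
    have e3 := key hbij htr h3 hhz hg' hφR
    have e4 := key hbij htr h4 hhz hg' hφR
    have heval := congrArg (fun (T : X →L[𝕜] X) => h (T z)) heq
    simp only [ContinuousLinearMap.add_apply, ContinuousLinearMap.coe_smul', Pi.smul_apply,
      smul_eq_mul, map_add, map_smul] at heval ⊢
    rw [ContinuousLinearMap.sub_apply, map_sub]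
    simp only [ContinuousLinearMap.add_apply, ContinuousLinearMap.coe_smul', Pi.smul_apply,
      map_add, map_smul, smul_eq_mul, e1, e2, e3, e4]
    rw [sub_eq_zero]
    exact heval
  have := nondeg (D := (c1 • φ (f1.smulRight x1) + c2 • φ (f2.smulRight x2))
        - (c3 • φ (f3.smulRight x3) + c4 • φ (f4.smulRight x4))) main
  exact sub_eq_zero.1 this

end Phi

end WignerAux


namespace WignerAux

variable {𝕜 X : Type*} [RCLike 𝕜] [NormedAddCommGroup X] [NormedSpace 𝕜 X]

/-- if `ker g₂ ⊆ ker g₁` and `g₂ ≠ 0` then `g₁` is a multiple of `g₂`. -/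
lemma dep {g1 g2 : X →L[𝕜] 𝕜} (hg2 : g2 ≠ 0)
    (h : ∀ w, g2 w = 0 → g1 w = 0) : ∃ c : 𝕜, g1 = c • g2 := by
  have : ∃ w, g2 w ≠ 0 := by
    by_contra hc
    push_neg at hc
    exact hg2 (by ext w; simpa using hc w)
  obtain ⟨w, hw⟩ := this
  set w0 := (g2 w)⁻¹ • w with hw0
  have hgw0 : g2 w0 = 1 := by
    simp [hw0, inv_mul_cancel₀ hw]
  refine ⟨g1 w0, ?_⟩
  ext v
  have hker : g2 (v - g2 v • w0) = 0 := by simp [hgw0]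
  have := h _ hker
  simp only [map_sub, map_smul, smul_eq_mul, hgw0, sub_eq_zero] at this
  simp only [ContinuousLinearMap.coe_smul', Pi.smul_apply, smul_eq_mul]
  rw [this]; ring

lemma not_dep {g1 g2 : X →L[𝕜] 𝕜} (hg1 : g1 ≠ 0) (hg2 : g2 ≠ 0)
    (h : ¬ ∃ c : 𝕜, g2 = c • g1) :
    (∃ w, g1 w ≠ 0 ∧ g2 w = 0) ∧ (∃ w, g2 w ≠ 0 ∧ g1 w = 0) := by
  constructor
  · by_contra hc
    push_neg at hc
    -- hc : ∀ w, g1 w ≠ 0 → g2 w ≠ 0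
    obtain ⟨c, hcc⟩ := dep (g1 := g1) hg2 (fun w hw => by
      by_contra hne
      exact hc w hne hw)
    -- hcc : g1 = c • g2 ; c ≠ 0 since g1 ≠ 0
    have hcne : c ≠ 0 := by
      rintro rfl
      exact hg1 (by ext z; rw [hcc]; simp)
    exact h ⟨c⁻¹, by rw [hcc, smul_smul, inv_mul_cancel₀ hcne, one_smul]⟩
  · by_contra hc
    push_neg at hc
    -- hc : ∀ w, g2 w ≠ 0 → g1 w ≠ 0
    obtain ⟨c, hcc⟩ := dep (g1 := g2) hg1 (fun w hw => by
      by_contra hne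
      exact hc w hne hw)
    exact h ⟨c, hcc⟩

/-- if a sum of two rank-one operators is rank-one, the vectors or the functionals
are parallel. -/
lemma share' {x1 x2 v : X} {g1 g2 q : X →L[𝕜] 𝕜}
    (hx1 : x1 ≠ 0) (hx2 : x2 ≠ 0) (hg1 : g1 ≠ 0) (hg2 : g2 ≠ 0)
    (hsum : g1.smulRight x1 + g2.smulRight x2 = q.smulRight v) :
    (∃ c : 𝕜, x2 = c • x1) ∨ (∃ c : 𝕜, g2 = c • g1) := by
  by_cases hng : ∃ c : 𝕜, g2 = c • g1
  · exact Or.inr hng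
  left
  obtain ⟨⟨w1, hw1a, hw1b⟩, ⟨w2, hw2a, hw2b⟩⟩ := not_dep hg1 hg2 hng
  have e1 := congrArg (fun (T : X →L[𝕜] X) => T w1) hsum
  have e2 := congrArg (fun (T : X →L[𝕜] X) => T w2) hsum
  simp only [ContinuousLinearMap.add_apply, smulRight_apply, hw1b, hw2b, zero_smul,
    add_zero, zero_add] at e1 e2
  -- e1 : g1 w1 • x1 = q w1 • v ; e2 : g2 w2 • x2 = q w2 • v
  have hqw1 : q w1 ≠ 0 := by
    intro h0; rw [h0, zero_smul] at e1
    exact hx1 (by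
      have := congrArg (fun z => (g1 w1)⁻¹ • z) e1
      simpa [smul_smul, inv_mul_cancel₀ hw1a] using this)
  have hqw2 : q w2 ≠ 0 := by
    intro h0; rw [h0, zero_smul] at e2
    exact hx2 (by
      have := congrArg (fun z => (g2 w2)⁻¹ • z) e2
      simpa [smul_smul, inv_mul_cancel₀ hw2a] using this)
  have hx1v : x1 = ((g1 w1)⁻¹ * q w1) • v := by
    have := congrArg (fun z => (g1 w1)⁻¹ • z) e1
    simpa [smul_smul, inv_mul_cancel₀ hw1a] using this
  have hx2v : x2 = ((g2 w2)⁻¹ * q w2) • v := by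
    have := congrArg (fun z => (g2 w2)⁻¹ • z) e2
    simpa [smul_smul, inv_mul_cancel₀ hw2a] using this
  refine ⟨((g2 w2)⁻¹ * q w2) * ((g1 w1)⁻¹ * q w1)⁻¹, ?_⟩
  rw [hx2v, hx1v, smul_smul, mul_assoc, inv_mul_cancel₀ (by
    exact mul_ne_zero (inv_ne_zero hw1a) hqw1), mul_one]

/-- equality of two rank-one representations -/
lemma rankOneEq {q g : X →L[𝕜] 𝕜} {m x : X} (hgx : g x = 1)
    (h : q.smulRight m = g.smulRight x) :
    ∃ c : 𝕜, c ≠ 0 ∧ q = c • g ∧ m = c⁻¹ • x := by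
  have hx : x ≠ 0 := fun h0 => by simp [h0] at hgx
  have e1 := congrArg (fun (T : X →L[𝕜] X) => T x) h
  simp only [smulRight_apply, hgx, one_smul] at e1
  -- e1 : q x • m = x
  have hqx : q x ≠ 0 := by
    intro h0; rw [h0, zero_smul] at e1; exact hx e1.symm
  refine ⟨q x, hqx, ?_, ?_⟩
  · ext w
    have e2 := congrArg (fun (T : X →L[𝕜] X) => T w) h
    simp only [smulRight_apply] at e2
    -- e2 : q w • m = g w • x
    have e3 : q w • x = (q x * g w) • x := by
      calc q w • x = q w • (q x • m) := by rw [e1]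
        _ = q x • (q w • m) := by rw [smul_smul, smul_smul, mul_comm]
        _ = q x • (g w • x) := by rw [e2]
        _ = (q x * g w) • x := by rw [smul_smul]
    simp only [ContinuousLinearMap.coe_smul', Pi.smul_apply, smul_eq_mul]
    exact smul_left_injective 𝕜 hx e3
  · have := congrArg (fun z => (q x)⁻¹ • z) e1
    simpa [smul_smul, inv_mul_cancel₀ hqx] using this

/-- an affine function vanishing off a finite set vanishes at 0 -/
lemma affine_cancel {a b : 𝕜} (S : Finset 𝕜) (h : ∀ t ∉ S, a + t * b = 0) : a = 0 := by
  obtain ⟨t1, ht1⟩ := Infinite.exists_notMem_finset S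
  obtain ⟨t2, ht2⟩ := Infinite.exists_notMem_finset (insert t1 S)
  have ht2S : t2 ∉ S := fun hc => ht2 (Finset.mem_insert_of_mem hc)
  have ht12 : t1 ≠ t2 := fun hc => ht2 (hc ▸ Finset.mem_insert_self t1 S)
  have e1 := h t1 ht1
  have e2 := h t2 ht2S
  have hb : b = 0 := by
    have : (t1 - t2) * b = 0 := by linear_combination e1 - e2
    rcases mul_eq_zero.1 this with h0 | h0
    · exact absurd (sub_eq_zero.1 h0) ht12
    · exact h0
  rw [hb, mul_zero, add_zero] at e1
  exact e1

end WignerAux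


namespace WignerAux

variable {𝕜 X : Type*} [RCLike 𝕜] [NormedAddCommGroup X] [NormedSpace 𝕜 X]

lemma vec_ne_zero {μ : X →L[𝕜] 𝕜} {m : X} (h : μ m = 1) : m ≠ 0 := by
  intro h0; rw [h0] at h; simp at h

lemma fun_ne_zero {μ : X →L[𝕜] 𝕜} {m : X} (h : μ m = 1) : μ ≠ 0 := by
  intro h0; rw [h0] at h; simp at h

/-- a pairwise "rank-one-sum" family shares a common kernel or a common range. -/
lemma W2' (S : Set (X →L[𝕜] X))
    {u1 : X} {f1 : X →L[𝕜] 𝕜} (hf1u1 : f1 u1 = 1) (hP0 : f1.smulRight u1 ∈ S)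
    (hS : ∀ W ∈ S, W ∈ rankOneIdempotents 𝕜 X)
    (hpair : ∀ W1 ∈ S, ∀ W2 ∈ S, ∃ (q : X →L[𝕜] 𝕜) (v : X), W1 + W2 = q.smulRight v) :
    (∀ W ∈ S, ∃ u, f1 u = 1 ∧ W = f1.smulRight u) ∨
    (∀ W ∈ S, ∃ p : X →L[𝕜] 𝕜, p u1 = 1 ∧ W = p.smulRight u1) := by
  have hshare : ∀ {m1 m2 : X} {μ1 μ2 : X →L[𝕜] 𝕜}, μ1 m1 = 1 → μ2 m2 = 1 →
      μ1.smulRight m1 ∈ S → μ2.smulRight m2 ∈ S →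
      (∃ c : 𝕜, m2 = c • m1) ∨ (∃ c : 𝕜, μ2 = c • μ1) := by
    intro m1 m2 μ1 μ2 h1 h2 hW1 hW2
    obtain ⟨q, v, hsum⟩ := hpair _ hW1 _ hW2
    exact share' (vec_ne_zero h1) (vec_ne_zero h2) (fun_ne_zero h1) (fun_ne_zero h2) hsum
  -- forms
  have hkerform : ∀ {μ : X →L[𝕜] 𝕜} {m : X} (c : 𝕜), μ m = 1 → μ = c • f1 →
      ∃ u, f1 u = 1 ∧ μ.smulRight m = f1.smulRight u := by
    intro μ m c hμm hμc
    refine ⟨c • m, ?_, ?_⟩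
    · rw [← hμm, hμc]; simp [mul_comm]
    · rw [hμc, sr_smul_switch]
  have hranform : ∀ {μ : X →L[𝕜] 𝕜} {m : X} (c : 𝕜), μ m = 1 → m = c • u1 →
      ∃ p : X →L[𝕜] 𝕜, p u1 = 1 ∧ μ.smulRight m = p.smulRight u1 := by
    intro μ m c hμm hmc
    refine ⟨c • μ, ?_, ?_⟩
    · rw [← hμm, hmc]; simp [mul_comm]
    · rw [hmc, sr_smul_switch]
  by_cases hK : ∀ W ∈ S, ∃ u, f1 u = 1 ∧ W = f1.smulRight u
  · exact Or.inl hK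
  push_neg at hK
  obtain ⟨Wst, hWstS, hWst⟩ := hK
  obtain ⟨mst, μst, hμmst, hWstrep⟩ := hS _ hWstS
  rw [hWstrep] at hWstS hWst
  have hμst_nf1 : ¬ ∃ c : 𝕜, μst = c • f1 := by
    rintro ⟨c, hc⟩
    obtain ⟨u, hu1, hu2⟩ := hkerform c hμmst hc
    exact hWst u hu1 hu2
  have hmst : ∃ c : 𝕜, mst = c • u1 := by
    rcases hshare hf1u1 hμmst hP0 hWstS with h | h
    · exact h
    · exact absurd h hμst_nf1
  obtain ⟨cst, hcst⟩ := hmst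
  right
  intro W hW
  obtain ⟨m, μ, hμm, hWrep⟩ := hS _ hW
  rw [hWrep] at hW ⊢
  rcases hshare hf1u1 hμm hP0 hW with ⟨c, hc⟩ | ⟨c, hc⟩
  · exact hranform c hμm hc
  · rcases hshare hμmst hμm hWstS hW with ⟨c2, hc2⟩ | ⟨c2, hc2⟩
    · exact hranform (c2 * cst) hμm (by rw [hc2, hcst, smul_smul])
    · exfalso
      have hc2ne : c2 ≠ 0 := by
        rintro rfl
        exact fun_ne_zero hμm (by ext z; rw [hc2]; simp)
      exact hμst_nf1 ⟨c2⁻¹ * c, by rw [← smul_smul, ← hc, hc2, smul_smul,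
        inv_mul_cancel₀ hc2ne, one_smul]⟩

end WignerAux


namespace WignerAux

variable {𝕜 X : Type*} [RCLike 𝕜] [NormedAddCommGroup X] [NormedSpace 𝕜 X]

/-- elimination of the genericity conditions by affine perturbation -/
lemma elimD {u1 : X} {f1 : X →L[𝕜] 𝕜} (hf1u1 : f1 u1 = 1) {Dop : X →L[𝕜] X}
    (claim0 : ∀ (y : X) (g : X →L[𝕜] 𝕜), g y = 1 → f1 y ≠ 0 → g u1 ≠ 0 → g (Dop y) = 0) :
    Dop = 0 := by
  apply nondeg
  intro y g hgy
  have outer : ∀ t : 𝕜, g u1 + t ≠ 0 → g (Dop y) + t * f1 (Dop y) = 0 := by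
    intro t ht
    have inner : ∀ s : 𝕜, f1 y + s ≠ 0 → (1 + t * f1 y) + s * (g u1 + t) ≠ 0 →
        (g (Dop y) + t * f1 (Dop y)) + s * (g (Dop u1) + t * f1 (Dop u1)) = 0 := by
      intro s hs hval
      have hgtys : (g + t • f1) (y + s • u1) = (1 + t * f1 y) + s * (g u1 + t) := by
        simp only [ContinuousLinearMap.add_apply, ContinuousLinearMap.coe_smul', Pi.smul_apply,
          smul_eq_mul, map_add, map_smul, hgy, hf1u1]
        ring
      have hne : (g + t • f1) (y + s • u1) ≠ 0 := by rw [hgtys]; exact hval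
      have h1 : (g + t • f1) (((g + t • f1) (y + s • u1))⁻¹ • (y + s • u1)) = 1 := by
        rw [map_smul]; simp only [smul_eq_mul]; exact inv_mul_cancel₀ hne
      have h2 : f1 (((g + t • f1) (y + s • u1))⁻¹ • (y + s • u1)) ≠ 0 := by
        rw [map_smul]; simp only [smul_eq_mul]
        apply mul_ne_zero (inv_ne_zero hne)
        have hexp : f1 (y + s • u1) = f1 y + s := by
          simp [map_add, map_smul, hf1u1]
        rw [hexp]; exact hs
      have h3 : (g + t • f1) u1 ≠ 0 := by
        have hexp : (g + t • f1) u1 = g u1 + t := by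
          simp [hf1u1]
        rw [hexp]; exact ht
      have h0 := claim0 _ _ h1 h2 h3
      rw [map_smul, map_smul] at h0
      simp only [smul_eq_mul] at h0
      rcases mul_eq_zero.1 h0 with hc | hc
      · exact absurd hc (inv_ne_zero hne)
      · have hexp : (g + t • f1) (Dop (y + s • u1)) =
            (g (Dop y) + t * f1 (Dop y)) + s * (g (Dop u1) + t * f1 (Dop u1)) := by
          simp only [map_add, map_smul, ContinuousLinearMap.add_apply,
            ContinuousLinearMap.coe_smul', Pi.smul_apply, smul_eq_mul]
          try ring
        rw [← hexp]; exact hc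
    apply affine_cancel (S := {-(f1 y), (-(1 + t * f1 y)) / (g u1 + t)})
    intro s hsS
    simp only [Finset.mem_insert, Finset.mem_singleton] at hsS
    push_neg at hsS
    obtain ⟨hs1, hs2⟩ := hsS
    apply inner s
    · intro h0; exact hs1 (by linear_combination h0)
    · intro h0
      apply hs2
      rw [eq_div_iff ht]
      linear_combination h0
  apply affine_cancel (S := {-(g u1)})
  intro t htS
  simp only [Finset.mem_singleton] at htS
  apply outer
  intro h0
  exact htS (by linear_combination h0)

end WignerAux


namespace WignerAux

variable {𝕜 X : Type*} [RCLike 𝕜] [NormedAddCommGroup X] [NormedSpace 𝕜 X]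
variable {φ : (X →L[𝕜] X) → (X →L[𝕜] X)}
variable (hbij : Set.BijOn φ (rankOneIdempotents 𝕜 X) (rankOneIdempotents 𝕜 X))
variable (htr : Htr φ)

include hbij htr

lemma case1build {x0 : X} {f0 : X →L[𝕜] 𝕜} (hx0 : f0 x0 = 1)
    {u1 : X} {f1 : X →L[𝕜] 𝕜} (hf1u1 : f1 u1 = 1)
    (hrepP0 : φ (f0.smulRight x0) = f1.smulRight u1)
    (hGy : ∀ y, f0 y = 1 → ∃ u, f1 u = 1 ∧ φ (f0.smulRight y) = f1.smulRight u)
    (hFg : ∀ g : X →L[𝕜] 𝕜, g x0 = 1 →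
      ∃ p : X →L[𝕜] 𝕜, p u1 = 1 ∧ φ (g.smulRight x0) = p.smulRight u1) :
    ∃ (A : X → X) (B : (X →L[𝕜] 𝕜) → (X →L[𝕜] 𝕜)),
      (∀ u v, A (u + v) = A u + A v) ∧ (∀ (c : 𝕜) (v : X), A (c • v) = c • A v) ∧
      (∀ (x : X) (f : X →L[𝕜] 𝕜), f x = 1 → φ (f.smulRight x) = (B f).smulRight (A x)) := by
  have hyv : ∀ v : X, f0 (v + (1 - f0 v) • x0) = 1 := by
    intro v; simp [hx0]
  have hhat : ∀ f : X →L[𝕜] 𝕜, (f + (1 - f x0) • f0) x0 = 1 := by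
    intro f; simp [hx0]
  set A : X → X := fun v => φ (f0.smulRight (v + (1 - f0 v) • x0)) u1 - (1 - f0 v) • u1
    with hA
  set B : (X →L[𝕜] 𝕜) → (X →L[𝕜] 𝕜) :=
    fun f => f1.comp (φ ((f + (1 - f x0) • f0).smulRight x0)) + (f x0 - 1) • f1 with hB
  -- the f0-family images, concretely
  have haY : ∀ y, f0 y = 1 →
      f1 (φ (f0.smulRight y) u1) = 1 ∧
      φ (f0.smulRight y) = f1.smulRight (φ (f0.smulRight y) u1) := by
    intro y hy
    obtain ⟨u, hu, hrep⟩ := hGy y hy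
    have hval : φ (f0.smulRight y) u1 = u := by rw [hrep]; simp [hf1u1]
    rw [hval, hu, hrep]
    exact ⟨rfl, rfl⟩
  -- S-operator identity
  have hSspec : ∀ v, φ (f0.smulRight (v + (1 - f0 v) • x0)) - (1 - f0 v) • φ (f0.smulRight x0)
      = f1.smulRight (A v) := by
    intro v
    rw [(haY _ (hyv v)).2, hrepP0]
    simp only [hA]
    rw [sr_sub_vec, sr_smul_vec]
  -- B-operator identity
  have hBspec : ∀ f : X →L[𝕜] 𝕜,
      φ ((f + (1 - f x0) • f0).smulRight x0) + (f x0 - 1) • φ (f0.smulRight x0)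
      = (B f).smulRight u1 := by
    intro f
    obtain ⟨p, hp, hrep⟩ := hFg (f + (1 - f x0) • f0) (hhat f)
    simp only [hB]
    rw [hrep, hrepP0, comp_fun_sr, hf1u1, one_smul, sr_add_fun, sr_smul_fun]
  -- additivity of A
  have hAadd : ∀ u v, A (u + v) = A u + A v := by
    intro u v
    have hid : (1:𝕜) • f0.smulRight ((u + v) + (1 - f0 (u + v)) • x0) + (1:𝕜) • f0.smulRight x0
        = (1:𝕜) • f0.smulRight (u + (1 - f0 u) • x0) + (1:𝕜) • f0.smulRight (v + (1 - f0 v) • x0) := by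
      simp only [one_smul]
      rw [← sr_add_vec, ← sr_add_vec]
      congr 1
      simp only [map_add]
      module
    have hcomb := comb4 hbij htr (hyv (u + v)) hx0 (hyv u) (hyv v) 1 1 1 1 hid
    simp only [one_smul] at hcomb
    have he := congrArg (fun (T : X →L[𝕜] X) => T u1) hcomb
    simp only [ContinuousLinearMap.add_apply] at he
    rw [hrepP0] at he
    simp only [smulRight_apply, hf1u1, one_smul] at he
    -- he : φ (f0⊗(u+v+..)) u1 + u1 = φ (f0⊗(u+..)) u1 + φ (f0⊗(v+..)) u1
    simp only [hA, map_add]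
    have he' : φ (f0.smulRight ((u + v) + (1 - (f0 u + f0 v)) • x0)) u1
        = φ (f0.smulRight (u + (1 - f0 u) • x0)) u1
          + φ (f0.smulRight (v + (1 - f0 v) • x0)) u1 - u1 := by
      rw [← he]; simp only [map_add]; abel
    rw [he']
    module
  -- homogeneity of A
  have hAsmul : ∀ (c : 𝕜) (v : X), A (c • v) = c • A v := by
    intro c v
    have hid : (1:𝕜) • f0.smulRight ((c • v) + (1 - f0 (c • v)) • x0) + (0:𝕜) • f0.smulRight x0
        = c • f0.smulRight (v + (1 - f0 v) • x0) + (1 - c) • f0.smulRight x0 := by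
      rw [zero_smul, add_zero, one_smul, ← sr_smul_vec, ← sr_smul_vec, ← sr_add_vec]
      congr 1
      simp only [map_smul, smul_eq_mul]
      module
    have hcomb := comb4 hbij htr (hyv (c • v)) hx0 (hyv v) hx0 1 0 c (1 - c) hid
    rw [one_smul, zero_smul, add_zero] at hcomb
    have he := congrArg (fun (T : X →L[𝕜] X) => T u1) hcomb
    simp only [ContinuousLinearMap.add_apply, ContinuousLinearMap.coe_smul',
      Pi.smul_apply] at he
    rw [hrepP0] at he
    simp only [smulRight_apply, hf1u1, one_smul] at he
    -- he : φ (f0⊗(c•v+..)) u1 = c • φ (f0⊗(v+..)) u1 + (1-c) • u1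
    simp only [map_smul, smul_eq_mul] at he
    simp only [hA, map_smul, smul_eq_mul]
    rw [he]
    module
  refine ⟨A, B, hAadd, hAsmul, ?_⟩
  intro x f hfx
  have hD : (B f).smulRight (A x) - φ (f.smulRight x) = 0 := by
    apply elimD hf1u1
    intro y g hgy hf1y hgu1
    obtain ⟨R, hR, hφR⟩ := hbij.surjOn (mem_I1 hgy)
    obtain ⟨z, h, hhz, rfl⟩ := hR
    have E0 : g ((φ (f.smulRight x)) y) = h ((f.smulRight x) z) :=
      key hbij htr hfx hhz hgy hφR
    have k1 : g ((φ (f0.smulRight (x + (1 - f0 x) • x0))) y)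
        = h ((f0.smulRight (x + (1 - f0 x) • x0)) z) :=
      key hbij htr (hyv x) hhz hgy hφR
    have k0 : g ((φ (f0.smulRight x0)) y) = h ((f0.smulRight x0) z) :=
      key hbij htr hx0 hhz hgy hφR
    have kf : g ((φ ((f + (1 - f x0) • f0).smulRight x0)) y)
        = h (((f + (1 - f x0) • f0).smulRight x0) z) :=
      key hbij htr (hhat f) hhz hgy hφR
    -- E1
    have eS := congrArg (fun (T : X →L[𝕜] X) => g (T y)) (hSspec x)
    simp only [ContinuousLinearMap.sub_apply, ContinuousLinearMap.coe_smul', Pi.smul_apply,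
      map_sub, map_smul, smul_eq_mul, smulRight_apply] at eS
    rw [k1, k0] at eS
    simp only [smulRight_apply, map_add, map_smul, smul_eq_mul] at eS
    have E1 : f1 y * g (A x) = f0 z * h x := by linear_combination -eS
    -- E2
    have eB := congrArg (fun (T : X →L[𝕜] X) => g (T y)) (hBspec f)
    simp only [ContinuousLinearMap.add_apply, ContinuousLinearMap.coe_smul', Pi.smul_apply,
      map_add, map_smul, smul_eq_mul, smulRight_apply] at eB
    rw [kf, k0] at eB
    simp only [smulRight_apply, map_add, map_smul, smul_eq_mul,
      ContinuousLinearMap.add_apply, ContinuousLinearMap.coe_smul', Pi.smul_apply] at eB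
    have E2 : (B f) y * g u1 = f z * h x0 := by linear_combination -eB
    -- E3
    have k0' := k0
    rw [hrepP0] at k0'
    simp only [smulRight_apply, map_smul, smul_eq_mul] at k0'
    -- k0' : f1 y * g u1 = f0 z * h x0
    have hne : f1 y * g u1 ≠ 0 := mul_ne_zero hf1y hgu1
    have hmain : (f1 y * g u1) * ((B f) y * g (A x)) = (f1 y * g u1) * (f z * h x) := by
      calc (f1 y * g u1) * ((B f) y * g (A x))
          = (f1 y * g (A x)) * ((B f) y * g u1) := by ring
        _ = (f0 z * h x) * (f z * h x0) := by rw [E1, E2]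
        _ = (f0 z * h x0) * (f z * h x) := by ring
        _ = (f1 y * g u1) * (f z * h x) := by rw [k0']
    have hfin := mul_left_cancel₀ hne hmain
    -- conclude : g (Dop y) = 0
    simp only [ContinuousLinearMap.sub_apply, map_sub, smulRight_apply, map_smul, smul_eq_mul]
    rw [hfin, E0]
    simp only [smulRight_apply, map_smul, smul_eq_mul, sub_self]
  exact (sub_eq_zero.1 hD).symm

end WignerAux


namespace WignerAux

variable {𝕜 X : Type*} [RCLike 𝕜] [NormedAddCommGroup X] [NormedSpace 𝕜 X]
variable {φ : (X →L[𝕜] X) → (X →L[𝕜] X)}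
variable (hbij : Set.BijOn φ (rankOneIdempotents 𝕜 X) (rankOneIdempotents 𝕜 X))
variable (htr : Htr φ)

include hbij htr

lemma case2build {x0 : X} {f0 : X →L[𝕜] 𝕜} (hx0 : f0 x0 = 1)
    {u1 : X} {f1 : X →L[𝕜] 𝕜} (hf1u1 : f1 u1 = 1)
    (hrepP0 : φ (f0.smulRight x0) = f1.smulRight u1)
    (hGy : ∀ y, f0 y = 1 → ∃ p : X →L[𝕜] 𝕜, p u1 = 1 ∧ φ (f0.smulRight y) = p.smulRight u1)
    (hFg : ∀ g : X →L[𝕜] 𝕜, g x0 = 1 →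
      ∃ u, f1 u = 1 ∧ φ (g.smulRight x0) = f1.smulRight u) :
    ∃ (C : (X →L[𝕜] 𝕜) → X) (D : X → (X →L[𝕜] 𝕜)),
      (∀ g h : X →L[𝕜] 𝕜, C (g + h) = C g + C h) ∧
      (∀ (c : 𝕜) (g : X →L[𝕜] 𝕜), C (c • g) = c • C g) ∧
      (∀ (x : X) (f : X →L[𝕜] 𝕜), f x = 1 → φ (f.smulRight x) = (D x).smulRight (C f)) := by
  have hyv : ∀ v : X, f0 (v + (1 - f0 v) • x0) = 1 := by
    intro v; simp [hx0]
  have hhat : ∀ f : X →L[𝕜] 𝕜, (f + (1 - f x0) • f0) x0 = 1 := by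
    intro f; simp [hx0]
  set D : X → (X →L[𝕜] 𝕜) :=
    fun v => f1.comp (φ (f0.smulRight (v + (1 - f0 v) • x0))) - (1 - f0 v) • f1 with hD
  set C : (X →L[𝕜] 𝕜) → X :=
    fun f => φ ((f + (1 - f x0) • f0).smulRight x0) u1 - (1 - f x0) • u1 with hC
  -- the f0-family images, concretely
  have haY : ∀ y, f0 y = 1 →
      (f1.comp (φ (f0.smulRight y))) u1 = 1 ∧
      φ (f0.smulRight y) = (f1.comp (φ (f0.smulRight y))).smulRight u1 := by
    intro y hy
    obtain ⟨p, hp, hrep⟩ := hGy y hy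
    have hval : f1.comp (φ (f0.smulRight y)) = p := by
      rw [hrep, comp_fun_sr, hf1u1, one_smul]
    rw [hval, hrep]
    exact ⟨hp, rfl⟩
  -- the x0-family images, concretely
  have haF : ∀ g : X →L[𝕜] 𝕜, g x0 = 1 →
      f1 (φ (g.smulRight x0) u1) = 1 ∧
      φ (g.smulRight x0) = f1.smulRight (φ (g.smulRight x0) u1) := by
    intro g hg
    obtain ⟨u, hu, hrep⟩ := hFg g hg
    have hval : φ (g.smulRight x0) u1 = u := by rw [hrep]; simp [hf1u1]
    rw [hval, hu, hrep]
    exact ⟨rfl, rfl⟩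
  -- T-operator identity
  have hTspec : ∀ v, φ (f0.smulRight (v + (1 - f0 v) • x0)) - (1 - f0 v) • φ (f0.smulRight x0)
      = (D v).smulRight u1 := by
    intro v
    nth_rewrite 1 [(haY _ (hyv v)).2]
    rw [hrepP0]
    simp only [hD]
    rw [sr_sub_fun, sr_smul_fun]
  -- C-operator identity
  have hCspec : ∀ f : X →L[𝕜] 𝕜,
      φ ((f + (1 - f x0) • f0).smulRight x0) + (f x0 - 1) • φ (f0.smulRight x0)
      = f1.smulRight (C f) := by
    intro f
    nth_rewrite 1 [(haF _ (hhat f)).2]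
    rw [hrepP0]
    simp only [hC]
    rw [sr_sub_vec, sr_smul_vec]
    module
  -- additivity of C
  have hCadd : ∀ g h : X →L[𝕜] 𝕜, C (g + h) = C g + C h := by
    intro g h
    have hid : (1:𝕜) • ((g + h) + (1 - (g + h) x0) • f0).smulRight x0 + (1:𝕜) • f0.smulRight x0
        = (1:𝕜) • (g + (1 - g x0) • f0).smulRight x0 + (1:𝕜) • (h + (1 - h x0) • f0).smulRight x0 := by
      simp only [one_smul]
      rw [← sr_add_fun, ← sr_add_fun]
      congr 1
      simp only [ContinuousLinearMap.add_apply]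
      module
    have hcomb := comb4 hbij htr (hhat (g + h)) hx0 (hhat g) (hhat h) 1 1 1 1 hid
    simp only [one_smul] at hcomb
    have he := congrArg (fun (T : X →L[𝕜] X) => T u1) hcomb
    simp only [ContinuousLinearMap.add_apply] at he
    rw [hrepP0] at he
    simp only [smulRight_apply, hf1u1, one_smul] at he
    simp only [hC, ContinuousLinearMap.add_apply]
    have he' : φ (((g + h) + (1 - (g x0 + h x0)) • f0).smulRight x0) u1
        = φ ((g + (1 - g x0) • f0).smulRight x0) u1
          + φ ((h + (1 - h x0) • f0).smulRight x0) u1 - u1 := by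
      rw [← he]; abel
    rw [he']
    module
  -- homogeneity of C
  have hCsmul : ∀ (c : 𝕜) (g : X →L[𝕜] 𝕜), C (c • g) = c • C g := by
    intro c g
    have hid : (1:𝕜) • ((c • g) + (1 - (c • g) x0) • f0).smulRight x0 + (0:𝕜) • f0.smulRight x0
        = c • (g + (1 - g x0) • f0).smulRight x0 + (1 - c) • f0.smulRight x0 := by
      rw [zero_smul, add_zero, one_smul, ← sr_smul_fun, ← sr_smul_fun, ← sr_add_fun]
      congr 1
      simp only [ContinuousLinearMap.coe_smul', Pi.smul_apply, smul_eq_mul]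
      module
    have hcomb := comb4 hbij htr (hhat (c • g)) hx0 (hhat g) hx0 1 0 c (1 - c) hid
    rw [one_smul, zero_smul, add_zero] at hcomb
    have he := congrArg (fun (T : X →L[𝕜] X) => T u1) hcomb
    simp only [ContinuousLinearMap.add_apply, ContinuousLinearMap.coe_smul',
      Pi.smul_apply] at he
    rw [hrepP0] at he
    simp only [smulRight_apply, hf1u1, one_smul] at he
    simp only [ContinuousLinearMap.coe_smul', Pi.smul_apply, smul_eq_mul] at he
    simp only [hC, ContinuousLinearMap.coe_smul', Pi.smul_apply, smul_eq_mul]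
    rw [he]
    module
  refine ⟨C, D, hCadd, hCsmul, ?_⟩
  intro x f hfx
  have hDop : (D x).smulRight (C f) - φ (f.smulRight x) = 0 := by
    apply elimD hf1u1
    intro y g hgy hf1y hgu1
    obtain ⟨R, hR, hφR⟩ := hbij.surjOn (mem_I1 hgy)
    obtain ⟨z, h, hhz, rfl⟩ := hR
    have E0 : g ((φ (f.smulRight x)) y) = h ((f.smulRight x) z) :=
      key hbij htr hfx hhz hgy hφR
    have k1 : g ((φ (f0.smulRight (x + (1 - f0 x) • x0))) y)
        = h ((f0.smulRight (x + (1 - f0 x) • x0)) z) :=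
      key hbij htr (hyv x) hhz hgy hφR
    have k0 : g ((φ (f0.smulRight x0)) y) = h ((f0.smulRight x0) z) :=
      key hbij htr hx0 hhz hgy hφR
    have kf : g ((φ ((f + (1 - f x0) • f0).smulRight x0)) y)
        = h (((f + (1 - f x0) • f0).smulRight x0) z) :=
      key hbij htr (hhat f) hhz hgy hφR
    -- E1'
    have eS := congrArg (fun (T : X →L[𝕜] X) => g (T y)) (hTspec x)
    simp only [ContinuousLinearMap.sub_apply, ContinuousLinearMap.coe_smul', Pi.smul_apply,
      map_sub, map_smul, smul_eq_mul, smulRight_apply] at eS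
    rw [k1, k0] at eS
    simp only [smulRight_apply, map_add, map_smul, smul_eq_mul] at eS
    have E1 : (D x) y * g u1 = f0 z * h x := by linear_combination -eS
    -- E2'
    have eB := congrArg (fun (T : X →L[𝕜] X) => g (T y)) (hCspec f)
    simp only [ContinuousLinearMap.add_apply, ContinuousLinearMap.coe_smul', Pi.smul_apply,
      map_add, map_smul, smul_eq_mul, smulRight_apply] at eB
    rw [kf, k0] at eB
    simp only [smulRight_apply, map_add, map_smul, smul_eq_mul,
      ContinuousLinearMap.add_apply, ContinuousLinearMap.coe_smul', Pi.smul_apply] at eB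
    have E2 : f1 y * g (C f) = f z * h x0 := by linear_combination -eB
    -- E3
    have k0' := k0
    rw [hrepP0] at k0'
    simp only [smulRight_apply, map_smul, smul_eq_mul] at k0'
    have hne : f1 y * g u1 ≠ 0 := mul_ne_zero hf1y hgu1
    have hmain : (f1 y * g u1) * ((D x) y * g (C f)) = (f1 y * g u1) * (f z * h x) := by
      calc (f1 y * g u1) * ((D x) y * g (C f))
          = ((D x) y * g u1) * (f1 y * g (C f)) := by ring
        _ = (f0 z * h x) * (f z * h x0) := by rw [E1, E2]
        _ = (f0 z * h x0) * (f z * h x) := by ring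
        _ = (f1 y * g u1) * (f z * h x) := by rw [k0']
    have hfin := mul_left_cancel₀ hne hmain
    simp only [ContinuousLinearMap.sub_apply, map_sub, smulRight_apply, map_smul, smul_eq_mul]
    rw [hfin, E0]
    simp only [smulRight_apply, map_smul, smul_eq_mul, sub_self]
  exact (sub_eq_zero.1 hDop).symm

end WignerAux


namespace WignerAux

variable {𝕜 X : Type*} [RCLike 𝕜] [NormedAddCommGroup X] [NormedSpace 𝕜 X]
variable {φ : (X →L[𝕜] X) → (X →L[𝕜] X)}
variable (hbij : Set.BijOn φ (rankOneIdempotents 𝕜 X) (rankOneIdempotents 𝕜 X))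
variable (htr : Htr φ)

include hbij htr

lemma master {x0 : X} {f0 : X →L[𝕜] 𝕜} (hx0 : f0 x0 = 1)
    {w' : X} (hw'0 : w' ≠ 0) (hfw' : f0 w' = 0) :
    (∃ (A : X → X) (B : (X →L[𝕜] 𝕜) → (X →L[𝕜] 𝕜)),
      (∀ u v, A (u + v) = A u + A v) ∧ (∀ (c : 𝕜) (v : X), A (c • v) = c • A v) ∧
      (∀ (x : X) (f : X →L[𝕜] 𝕜), f x = 1 → φ (f.smulRight x) = (B f).smulRight (A x))) ∨
    (∃ (C : (X →L[𝕜] 𝕜) → X) (D : X → (X →L[𝕜] 𝕜)),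
      (∀ g h : X →L[𝕜] 𝕜, C (g + h) = C g + C h) ∧
      (∀ (c : 𝕜) (g : X →L[𝕜] 𝕜), C (c • g) = c • C g) ∧
      (∀ (x : X) (f : X →L[𝕜] 𝕜), f x = 1 → φ (f.smulRight x) = (D x).smulRight (C f))) := by
  obtain ⟨u1, f1, hf1u1, hrepP0⟩ := hbij.mapsTo (mem_I1 hx0)
  have h2ne : (2:𝕜) ≠ 0 := two_ne_zero
  set SG : Set (X →L[𝕜] X) := {W | ∃ y, f0 y = 1 ∧ W = φ (f0.smulRight y)} with hSGdef
  set SF : Set (X →L[𝕜] X) := {W | ∃ g : X →L[𝕜] 𝕜, g x0 = 1 ∧ W = φ (g.smulRight x0)}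
    with hSFdef
  have hSGmem : ∀ W ∈ SG, W ∈ rankOneIdempotents 𝕜 X := by
    rintro W ⟨y, hy, rfl⟩; exact hbij.mapsTo (mem_I1 hy)
  have hSFmem : ∀ W ∈ SF, W ∈ rankOneIdempotents 𝕜 X := by
    rintro W ⟨g, hg, rfl⟩; exact hbij.mapsTo (mem_I1 hg)
  have hP0G : f1.smulRight u1 ∈ SG := ⟨x0, hx0, hrepP0.symm⟩
  have hP0F : f1.smulRight u1 ∈ SF := ⟨f0, hx0, hrepP0.symm⟩
  have hpairG : ∀ W1 ∈ SG, ∀ W2 ∈ SG, ∃ (q : X →L[𝕜] 𝕜) (v : X), W1 + W2 = q.smulRight v := by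
    rintro W1 ⟨y1, hy1, rfl⟩ W2 ⟨y2, hy2, rfl⟩
    have hmid : f0 ((2:𝕜)⁻¹ • (y1 + y2)) = 1 := by
      simp only [map_smul, map_add, hy1, hy2, smul_eq_mul]
      norm_num
    have hid : (1:𝕜) • f0.smulRight y1 + (1:𝕜) • f0.smulRight y2
        = (2:𝕜) • f0.smulRight ((2:𝕜)⁻¹ • (y1 + y2)) + (0:𝕜) • f0.smulRight x0 := by
      rw [zero_smul, add_zero, one_smul, one_smul, sr_smul_vec, smul_smul,
        mul_inv_cancel₀ h2ne, one_smul, sr_add_vec]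
    have hcomb := comb4 hbij htr hy1 hy2 hmid hx0 1 1 2 0 hid
    rw [one_smul, one_smul, zero_smul, add_zero] at hcomb
    obtain ⟨mm, μμ, hμμ, hrepm⟩ := hbij.mapsTo (mem_I1 hmid)
    refine ⟨μμ, (2:𝕜) • mm, ?_⟩
    rw [hcomb, hrepm, sr_smul_vec]
  have hpairF : ∀ W1 ∈ SF, ∀ W2 ∈ SF, ∃ (q : X →L[𝕜] 𝕜) (v : X), W1 + W2 = q.smulRight v := by
    rintro W1 ⟨g1, hg1, rfl⟩ W2 ⟨g2, hg2, rfl⟩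
    have hmid : ((2:𝕜)⁻¹ • (g1 + g2)) x0 = 1 := by
      simp only [ContinuousLinearMap.coe_smul', Pi.smul_apply, ContinuousLinearMap.add_apply,
        hg1, hg2, smul_eq_mul]
      norm_num
    have hid : (1:𝕜) • g1.smulRight x0 + (1:𝕜) • g2.smulRight x0
        = (2:𝕜) • ((2:𝕜)⁻¹ • (g1 + g2)).smulRight x0 + (0:𝕜) • f0.smulRight x0 := by
      rw [zero_smul, add_zero, one_smul, one_smul, sr_smul_fun, smul_smul,
        mul_inv_cancel₀ h2ne, one_smul, sr_add_fun]
    have hcomb := comb4 hbij htr hg1 hg2 hmid hx0 1 1 2 0 hid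
    rw [one_smul, one_smul, zero_smul, add_zero] at hcomb
    obtain ⟨mm, μμ, hμμ, hrepm⟩ := hbij.mapsTo (mem_I1 hmid)
    refine ⟨μμ, (2:𝕜) • mm, ?_⟩
    rw [hcomb, hrepm, sr_smul_vec]
  -- the auxiliary "bad" rank-one idempotent
  obtain ⟨f2, hf2⟩ := sep (𝕜 := 𝕜) hw'0
  have hfx0 : (f0 + f2 - f2 x0 • f0) x0 = 1 := by
    simp only [ContinuousLinearMap.sub_apply, ContinuousLinearMap.add_apply,
      ContinuousLinearMap.coe_smul', Pi.smul_apply, smul_eq_mul, hx0]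
    ring
  have hf0y : f0 (x0 + w') = 1 := by simp [hx0, hfw']
  have hfy : (f0 + f2 - f2 x0 • f0) (x0 + w') = 2 := by
    simp only [ContinuousLinearMap.sub_apply, ContinuousLinearMap.add_apply,
      ContinuousLinearMap.coe_smul', Pi.smul_apply, smul_eq_mul, map_add, hx0, hfw', hf2]
    ring
  rcases W2' SG hf1u1 hP0G hSGmem hpairG with hG | hG <;>
    rcases W2' SF hf1u1 hP0F hSFmem hpairF with hF | hF
  · -- both kernel type : contradiction
    exfalso
    obtain ⟨u, hu, hrepu⟩ := hG _ (⟨x0 + w', hf0y, rfl⟩ : φ (f0.smulRight (x0 + w')) ∈ SG)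
    obtain ⟨u', hu', hrepu'⟩ := hF _
      (⟨f0 + f2 - f2 x0 • f0, hfx0, rfl⟩ :
        φ ((f0 + f2 - f2 x0 • f0).smulRight x0) ∈ SF)
    have hcon := htr x0 (x0 + w') (f0 + f2 - f2 x0 • f0) f0 u' u f1 f1
      hfx0 hf0y hu' hu hrepu' hrepu
    rw [hu, hu', hfy, hx0] at hcon
    norm_num at hcon
  · -- hG kernel type, hF range type : case 1
    left
    exact case1build hbij htr hx0 hf1u1 hrepP0
      (fun y hy => hG _ ⟨y, hy, rfl⟩) (fun g hg => hF _ ⟨g, hg, rfl⟩)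
  · -- hG range type, hF kernel type : case 2
    right
    exact case2build hbij htr hx0 hf1u1 hrepP0
      (fun y hy => hG _ ⟨y, hy, rfl⟩) (fun g hg => hF _ ⟨g, hg, rfl⟩)
  · -- both range type : contradiction
    exfalso
    obtain ⟨p, hp, hrepp⟩ := hG _ (⟨x0 + w', hf0y, rfl⟩ : φ (f0.smulRight (x0 + w')) ∈ SG)
    obtain ⟨p', hp', hrepp'⟩ := hF _
      (⟨f0 + f2 - f2 x0 • f0, hfx0, rfl⟩ :
        φ ((f0 + f2 - f2 x0 • f0).smulRight x0) ∈ SF)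
    have hcon := htr x0 (x0 + w') (f0 + f2 - f2 x0 • f0) f0 u1 u1 p' p
      hfx0 hf0y hp' hp hrepp' hrepp
    rw [hp, hp', hfy, hx0] at hcon
    norm_num at hcon

end WignerAux


namespace WignerAux

variable {𝕜 X : Type*} [RCLike 𝕜] [NormedAddCommGroup X] [NormedSpace 𝕜 X]

lemma sr_zero_vec (f : X →L[𝕜] 𝕜) : f.smulRight (0 : X) = 0 := by
  ext z; simp

lemma collin_contra {x0 w' : X} {f0 : X →L[𝕜] 𝕜} (hx0 : f0 x0 = 1) (hw'0 : w' ≠ 0)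
    (hfw' : f0 w' = 0) {n : X} {c1 c2 : 𝕜}
    (h1 : x0 = c1 • n) (h2 : x0 + w' = c2 • n) : False := by
  have hc1 : c1 ≠ 0 := by
    rintro rfl; rw [zero_smul] at h1; exact vec_ne_zero hx0 h1
  have hn : n = c1⁻¹ • x0 := by rw [h1, smul_smul, inv_mul_cancel₀ hc1, one_smul]
  have hw : w' = (c2 * c1⁻¹ - 1) • x0 := by
    rw [sub_smul, one_smul, ← smul_smul, ← hn, ← h2]; abel
  have hval : f0 w' = c2 * c1⁻¹ - 1 := by rw [hw, map_smul, smul_eq_mul, hx0, mul_one]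
  rw [hfw'] at hval
  apply hw'0
  rw [hw, ← hval, zero_smul]

end WignerAux

open WignerAux in
theorem wigner_type_banach' {𝕜 X : Type*} [RCLike 𝕜] [NormedAddCommGroup X]
    [NormedSpace 𝕜 X] [CompleteSpace X]
    (φ : (X →L[𝕜] X) → (X →L[𝕜] X))
    (hbij : Set.BijOn φ (rankOneIdempotents 𝕜 X) (rankOneIdempotents 𝕜 X))
    (htr : ∀ (x y : X) (f g : X →L[𝕜] 𝕜) (x' y' : X) (f' g' : X →L[𝕜] 𝕜),
      f x = 1 → g y = 1 → f' x' = 1 → g' y' = 1 →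
      φ (f.smulRight x) = f'.smulRight x' → φ (g.smulRight y) = g'.smulRight y' →
      f' y' * g' x' = f y * g x) :
    (∃ A : X →L[𝕜] X, Function.Bijective A ∧
      ∀ P ∈ rankOneIdempotents 𝕜 X, φ P ∘L A = A ∘L P) ∨
    (∃ C : (X →L[𝕜] 𝕜) →L[𝕜] X, Function.Bijective C ∧
      ∀ P ∈ rankOneIdempotents 𝕜 X, φ P ∘L C = C ∘L banachDualMap P) := by
  classical
  have htr' : Htr φ := htr
  by_cases hex : ∃ (x0 : X) (f0 : X →L[𝕜] 𝕜), f0 x0 = 1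
  swap
  · refine Or.inl ⟨1, ?_, ?_⟩
    · have : ⇑(1 : X →L[𝕜] X) = _root_.id := rfl
      rw [this]; exact Function.bijective_id
    · intro P hP; obtain ⟨x, f, hfx, _⟩ := hP; exact absurd ⟨x, f, hfx⟩ hex
  obtain ⟨x0, f0, hx0⟩ := hex
  by_cases hdim : ∀ w : X, w = f0 w • x0
  · -- dimension ≤ 1 : every rank-one idempotent is the identity
    have hone : ∀ P ∈ rankOneIdempotents 𝕜 X, P = 1 := by
      rintro P ⟨x, f, hfx, rfl⟩
      have hfx0mul : f0 x * f x0 = 1 := by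
        have : f x = f0 x * f x0 := by
          conv_lhs => rw [hdim x]
          rw [map_smul, smul_eq_mul]
        rw [← this, hfx]
      ext v
      have hfv : f v = f0 v * f x0 := by
        conv_lhs => rw [hdim v]
        rw [map_smul, smul_eq_mul]
      have : (f.smulRight x) v = v := by
        rw [smulRight_apply, hfv]
        conv_lhs => rw [hdim x]
        rw [smul_smul,
          show f0 v * f x0 * f0 x = f0 v by rw [mul_assoc, mul_comm (f x0), hfx0mul, mul_one],
          ← hdim v]
      rw [this]
      rfl
    refine Or.inl ⟨1, ?_, ?_⟩
    · have : ⇑(1 : X →L[𝕜] X) = _root_.id := rfl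
      rw [this]; exact Function.bijective_id
    · intro P hP
      have hφP : φ P = P := by rw [hone _ (hbij.mapsTo hP), hone _ hP]
      rw [hφP, ContinuousLinearMap.one_def, ContinuousLinearMap.comp_id,
        ContinuousLinearMap.id_comp]
  push_neg at hdim
  obtain ⟨w0, hw0⟩ := hdim
  have hw'0 : w0 - f0 w0 • x0 ≠ 0 := sub_ne_zero.2 hw0
  have hfw' : f0 (w0 - f0 w0 • x0) = 0 := by
    rw [map_sub, map_smul, smul_eq_mul, hx0, mul_one, sub_self]
  -- the inverse map ψ
  set ψ : (X →L[𝕜] X) → (X →L[𝕜] X) := fun W =>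
    if h : W ∈ rankOneIdempotents 𝕜 X then
      Classical.choose ((Set.mem_image φ _ _).mp (hbij.surjOn h))
    else W with hψdef
  have hψspec : ∀ W (hW : W ∈ rankOneIdempotents 𝕜 X),
      ψ W ∈ rankOneIdempotents 𝕜 X ∧ φ (ψ W) = W := by
    intro W hW
    have hspec := Classical.choose_spec ((Set.mem_image φ _ _).mp (hbij.surjOn hW))
    rw [hψdef]
    simp only [dif_pos hW]
    exact hspec
  have hψmem : ∀ W ∈ rankOneIdempotents 𝕜 X, ψ W ∈ rankOneIdempotents 𝕜 X :=
    fun W hW => (hψspec W hW).1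
  have hφψ : ∀ W ∈ rankOneIdempotents 𝕜 X, φ (ψ W) = W :=
    fun W hW => (hψspec W hW).2
  have hψφ : ∀ P ∈ rankOneIdempotents 𝕜 X, ψ (φ P) = P := by
    intro P hP
    exact hbij.injOn (hψmem _ (hbij.mapsTo hP)) hP (hφψ _ (hbij.mapsTo hP))
  have hbijψ : Set.BijOn ψ (rankOneIdempotents 𝕜 X) (rankOneIdempotents 𝕜 X) := by
    refine ⟨hψmem, ?_, ?_⟩
    · intro W1 hW1 W2 hW2 heq
      rw [← hφψ _ hW1, ← hφψ _ hW2, heq]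
    · intro P hP
      exact ⟨φ P, hbij.mapsTo hP, hψφ _ hP⟩
  have htrψ : Htr ψ := by
    intro x y f g x' y' f' g' hfx hgy hf'x' hg'y' h1 h2
    have hφ1 : φ (f'.smulRight x') = f.smulRight x := by
      rw [← h1]; exact hφψ _ (mem_I1 hfx)
    have hφ2 : φ (g'.smulRight y') = g.smulRight y := by
      rw [← h2]; exact hφψ _ (mem_I1 hgy)
    exact (htr' x' y' f' g' x y f g hf'x' hg'y' hfx hgy hφ1 hφ2).symm
  rcases master hbij htr' hx0 hw'0 hfw' with ⟨A, B, hAadd, hAsmul, hAB⟩ | ⟨C, D, hCadd, hCsmul, hCD⟩ <;>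
    rcases master hbijψ htrψ hx0 hw'0 hfw' with ⟨A', B', hA'add, hA'smul, hAB'⟩ | ⟨C', D', hC'add, hC'smul, hCD'⟩
  · -- matched case 1
    left
    have hABcoeff : ∀ (x : X) (f : X →L[𝕜] 𝕜), f x = 1 → (B f) (A x) = 1 := fun x f hfx =>
      rep_coeff (hbij.mapsTo (mem_I1 hfx)) (hAB x f hfx)
    have hABcoeff' : ∀ (x : X) (f : X →L[𝕜] 𝕜), f x = 1 → (B' f) (A' x) = 1 := fun x f hfx =>
      rep_coeff (hψmem _ (mem_I1 hfx)) (hAB' x f hfx)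
    have hBA : ∀ (x : X) (f : X →L[𝕜] 𝕜), f x = 1 → ∀ v, (B f) (A v) = f v := by
      intro x f hfx v
      by_cases hfv : f v = 0
      · have h1 := hABcoeff (x + v) f (by rw [map_add, hfx, hfv, add_zero])
        rw [hAadd, map_add, hABcoeff x f hfx] at h1
        rw [hfv]
        linear_combination h1
      · have h1 := hABcoeff ((f v)⁻¹ • v) f
          (by rw [map_smul, smul_eq_mul, inv_mul_cancel₀ hfv])
        rw [hAsmul, map_smul, smul_eq_mul] at h1
        have h2 := congrArg (fun r => f v * r) h1
        simp only [mul_one] at h2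
        rw [← mul_assoc, mul_inv_cancel₀ hfv, one_mul] at h2
        exact h2
    have hA0 : A 0 = 0 := by
      have h := hAsmul 0 0
      rw [zero_smul, zero_smul] at h
      exact h
    have hAneg : ∀ v, A (-v) = - A v := by
      intro v
      have h := hAsmul (-1) v
      rw [neg_one_smul, neg_one_smul] at h
      exact h
    have hcomp : ∀ (x : X) (f : X →L[𝕜] 𝕜), f x = 1 →
        f.smulRight x = (B (B' f)).smulRight (A (A' x)) := by
      intro x f hfx
      rw [← hφψ _ (mem_I1 hfx), hAB' x f hfx, hAB _ _ (hABcoeff' x f hfx)]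
    have hscale : ∀ (x : X) (f : X →L[𝕜] 𝕜), f x = 1 →
        ∃ c : 𝕜, c ≠ 0 ∧ B (B' f) = c • f ∧ A (A' x) = c⁻¹ • x := fun x f hfx =>
      rankOneEq hfx (hcomp x f hfx).symm
    have hAker : ∀ v, A v = 0 → v = 0 := by
      intro v hv
      by_contra hvne
      obtain ⟨f, hf⟩ := sep (𝕜 := 𝕜) hvne
      have h := hAB v f hf
      rw [hv, sr_zero_vec] at h
      exact I1_ne_zero (hbij.mapsTo (mem_I1 hf)) h
    have hAinj : Function.Injective A := by
      intro a b hab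
      have h0 : A (a - b) = 0 := by
        rw [sub_eq_add_neg, hAadd, hAneg, hab, add_neg_cancel]
      exact sub_eq_zero.1 (hAker _ h0)
    have hAsurj : Function.Surjective A := by
      intro x
      by_cases hx : x = 0
      · exact ⟨0, by rw [hA0, hx]⟩
      · obtain ⟨f, hf⟩ := sep (𝕜 := 𝕜) hx
        obtain ⟨c, hc, hBf, hAx⟩ := hscale x f hf
        refine ⟨c • A' x, ?_⟩
        rw [hAsmul, hAx, smul_smul, mul_inv_cancel₀ hc, one_smul]
    set AL : X →ₗ[𝕜] X :=
      { toFun := A, map_add' := hAadd, map_smul' := hAsmul } with hALdef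
    have hAcont : Continuous AL := by
      apply LinearMap.continuous_of_seq_closed_graph
      intro u x y hu hAu
      by_contra hne
      have hyne : y - A x ≠ 0 := sub_ne_zero.2 hne
      obtain ⟨q, hq⟩ := sep (𝕜 := 𝕜) hyne
      obtain ⟨c, hc, hBq, _⟩ := hscale (y - A x) q hq
      have hcoe' : (B' q) (A' (y - A x)) = 1 := hABcoeff' _ q hq
      have hptwise : ∀ n, (B (B' q)) (A (u n)) = (B' q) (u n) := fun n =>
        hBA _ _ hcoe' (u n)
      have hlim1 : Filter.Tendsto (fun n => (B (B' q)) (A (u n))) Filter.atTop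
          (nhds ((B (B' q)) y)) := ((B (B' q)).continuous.tendsto y).comp hAu
      have hlim2 : Filter.Tendsto (fun n => (B' q) (u n)) Filter.atTop
          (nhds ((B' q) x)) := ((B' q).continuous.tendsto x).comp hu
      have heq : (B (B' q)) y = (B' q) x := by
        have hfeq : (fun n => (B (B' q)) (A (u n))) = fun n => (B' q) (u n) :=
          funext hptwise
        exact tendsto_nhds_unique (hfeq ▸ hlim1) hlim2
      have hAxval : (B (B' q)) (A x) = (B' q) x := hBA _ _ hcoe' x
      have hzero : (B (B' q)) (y - A x) = 0 := by rw [map_sub, heq, hAxval, sub_self]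
      rw [hBq] at hzero
      simp only [ContinuousLinearMap.coe_smul', Pi.smul_apply, smul_eq_mul, hq,
        mul_one] at hzero
      exact hc hzero
    refine ⟨⟨AL, hAcont⟩, ⟨hAinj, hAsurj⟩, ?_⟩
    intro P hP
    obtain ⟨x, f, hfx, rfl⟩ := hP
    rw [hAB x f hfx]
    ext w
    show (B f) (A w) • A x = A ((f.smulRight x) w)
    rw [hBA x f hfx w, smulRight_apply, hAsmul]
  · -- mixed : φ of type 1, ψ of type 2 : contradiction
    exfalso
    have hcoeff : ∀ (x : X), f0 x = 1 → (D' x) (C' f0) = 1 := fun x hfx =>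
      rep_coeff (hψmem _ (mem_I1 hfx)) (hCD' x f0 hfx)
    have hcomp : ∀ (x : X), f0 x = 1 →
        f0.smulRight x = (B (D' x)).smulRight (A (C' f0)) := by
      intro x hfx
      rw [← hφψ _ (mem_I1 hfx), hCD' x f0 hfx, hAB _ _ (hcoeff x hfx)]
    have hx1 : f0 (x0 + (w0 - f0 w0 • x0)) = 1 := by rw [map_add, hx0, hfw', add_zero]
    have e1 := congrArg (fun (T : X →L[𝕜] X) => T x0) (hcomp x0 hx0)
    have e2 := congrArg (fun (T : X →L[𝕜] X) => T x0) (hcomp _ hx1)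
    simp only [smulRight_apply, hx0, one_smul] at e1 e2
    exact collin_contra hx0 hw'0 hfw' e1 e2
  · -- mixed : φ of type 2, ψ of type 1 : contradiction
    exfalso
    have hcoeff : ∀ (x : X), f0 x = 1 → (B' f0) (A' x) = 1 := fun x hfx =>
      rep_coeff (hψmem _ (mem_I1 hfx)) (hAB' x f0 hfx)
    have hcomp : ∀ (x : X), f0 x = 1 →
        f0.smulRight x = (D (A' x)).smulRight (C (B' f0)) := by
      intro x hfx
      rw [← hφψ _ (mem_I1 hfx), hAB' x f0 hfx, hCD _ _ (hcoeff x hfx)]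
    have hx1 : f0 (x0 + (w0 - f0 w0 • x0)) = 1 := by rw [map_add, hx0, hfw', add_zero]
    have e1 := congrArg (fun (T : X →L[𝕜] X) => T x0) (hcomp x0 hx0)
    have e2 := congrArg (fun (T : X →L[𝕜] X) => T x0) (hcomp _ hx1)
    simp only [smulRight_apply, hx0, one_smul] at e1 e2
    exact collin_contra hx0 hw'0 hfw' e1 e2
  · -- matched case 2
    right
    have hDCcoeff : ∀ (x : X) (f : X →L[𝕜] 𝕜), f x = 1 → (D x) (C f) = 1 := fun x f hfx =>
      rep_coeff (hbij.mapsTo (mem_I1 hfx)) (hCD x f hfx)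
    have hDCcoeff' : ∀ (x : X) (f : X →L[𝕜] 𝕜), f x = 1 → (D' x) (C' f) = 1 := fun x f hfx =>
      rep_coeff (hψmem _ (mem_I1 hfx)) (hCD' x f hfx)
    have hDCg : ∀ (x : X) (f : X →L[𝕜] 𝕜), f x = 1 → ∀ g : X →L[𝕜] 𝕜,
        (D x) (C g) = g x := by
      intro x f hfx g
      by_cases hgx : g x = 0
      · have h1 := hDCcoeff x (f + g)
          (by rw [ContinuousLinearMap.add_apply, hfx, hgx, add_zero])
        rw [hCadd, map_add, hDCcoeff x f hfx] at h1
        rw [hgx]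
        linear_combination h1
      · have h1 := hDCcoeff x ((g x)⁻¹ • g)
          (by rw [ContinuousLinearMap.coe_smul', Pi.smul_apply, smul_eq_mul,
            inv_mul_cancel₀ hgx])
        rw [hCsmul, map_smul, smul_eq_mul] at h1
        have h2 := congrArg (fun r => g x * r) h1
        simp only [mul_one] at h2
        rw [← mul_assoc, mul_inv_cancel₀ hgx, one_mul] at h2
        exact h2
    have hC0 : C 0 = 0 := by
      have hzz : (0:𝕜) • (0 : X →L[𝕜] 𝕜) = 0 := by ext z; simp
      have h := hCsmul 0 0
      rw [hzz, zero_smul] at h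
      exact h
    have hCneg : ∀ g : X →L[𝕜] 𝕜, C (-g) = - C g := by
      intro g
      have hng : (-1:𝕜) • g = -g := by ext z; simp
      have h := hCsmul (-1) g
      rw [hng, neg_one_smul] at h
      exact h
    have hcomp : ∀ (x : X) (f : X →L[𝕜] 𝕜), f x = 1 →
        f.smulRight x = (D (C' f)).smulRight (C (D' x)) := by
      intro x f hfx
      rw [← hφψ _ (mem_I1 hfx), hCD' x f hfx, hCD _ _ (hDCcoeff' x f hfx)]
    have hscale : ∀ (x : X) (f : X →L[𝕜] 𝕜), f x = 1 →
        ∃ c : 𝕜, c ≠ 0 ∧ D (C' f) = c • f ∧ C (D' x) = c⁻¹ • x := fun x f hfx =>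
      rankOneEq hfx (hcomp x f hfx).symm
    have hCker : ∀ g : X →L[𝕜] 𝕜, C g = 0 → g = 0 := by
      intro g hg
      by_contra hgne
      have hgx : ∃ x, g x = 1 := by
        have hne : ∃ x, g x ≠ 0 := by
          by_contra hcon
          push_neg at hcon
          exact hgne (by ext z; simpa using hcon z)
        obtain ⟨x, hx⟩ := hne
        exact ⟨(g x)⁻¹ • x, by rw [map_smul, smul_eq_mul, inv_mul_cancel₀ hx]⟩
      obtain ⟨x, hx⟩ := hgx
      have h := hCD x g hx
      rw [hg, sr_zero_vec] at h
      exact I1_ne_zero (hbij.mapsTo (mem_I1 hx)) h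
    have hCinj : Function.Injective C := by
      intro a b hab
      have h0 : C (a - b) = 0 := by
        rw [sub_eq_add_neg, hCadd, hCneg, hab, add_neg_cancel]
      exact sub_eq_zero.1 (hCker _ h0)
    have hCsurj : Function.Surjective C := by
      intro x
      by_cases hx : x = 0
      · exact ⟨0, by rw [hC0, hx]⟩
      · obtain ⟨f, hf⟩ := sep (𝕜 := 𝕜) hx
        obtain ⟨c, hc, hDf, hCx⟩ := hscale x f hf
        refine ⟨c • D' x, ?_⟩
        rw [hCsmul, hCx, smul_smul, mul_inv_cancel₀ hc, one_smul]
    set CL : (X →L[𝕜] 𝕜) →ₗ[𝕜] X :=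
      { toFun := C, map_add' := hCadd, map_smul' := hCsmul } with hCLdef
    have hCcont : Continuous CL := by
      apply LinearMap.continuous_of_seq_closed_graph
      intro u gq y hu hCu
      by_contra hne
      have hyne : y - C gq ≠ 0 := sub_ne_zero.2 hne
      obtain ⟨q, hq⟩ := sep (𝕜 := 𝕜) hyne
      obtain ⟨c, hc, hDq, _⟩ := hscale (y - C gq) q hq
      have hcoe' : (D' (y - C gq)) (C' q) = 1 := hDCcoeff' _ q hq
      have hptwise : ∀ n, (D (C' q)) (C (u n)) = (u n) (C' q) := fun n =>
        hDCg (C' q) (D' (y - C gq)) hcoe' (u n)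
      have hlim1 : Filter.Tendsto (fun n => (D (C' q)) (C (u n))) Filter.atTop
          (nhds ((D (C' q)) y)) := ((D (C' q)).continuous.tendsto y).comp hCu
      have hlim2 : Filter.Tendsto (fun n => (u n) (C' q)) Filter.atTop
          (nhds (gq (C' q))) :=
        ((ContinuousLinearMap.apply 𝕜 𝕜 (C' q)).continuous.tendsto gq).comp hu
      have heq : (D (C' q)) y = gq (C' q) := by
        have hfeq : (fun n => (D (C' q)) (C (u n))) = fun n => (u n) (C' q) :=
          funext hptwise
        exact tendsto_nhds_unique (hfeq ▸ hlim1) hlim2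
      have hCgqval : (D (C' q)) (C gq) = gq (C' q) := hDCg (C' q) (D' (y - C gq)) hcoe' gq
      have hzero : (D (C' q)) (y - C gq) = 0 := by rw [map_sub, heq, hCgqval, sub_self]
      rw [hDq] at hzero
      simp only [ContinuousLinearMap.coe_smul', Pi.smul_apply, smul_eq_mul, hq,
        mul_one] at hzero
      exact hc hzero
    refine ⟨⟨CL, hCcont⟩, ⟨hCinj, hCsurj⟩, ?_⟩
    intro P hP
    obtain ⟨x, f, hfx, rfl⟩ := hP
    rw [hCD x f hfx]
    ext h
    show ((D x).smulRight (C f)) (C h) = C (banachDualMap (f.smulRight x) h)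
    have hdual : banachDualMap (f.smulRight x) h = (h x) • f := by
      show h.comp (f.smulRight x) = (h x) • f
      rw [comp_fun_sr]
    rw [hdual, smulRight_apply, hDCg x f hfx h, hCsmul]


/-- **A Wigner-type theorem in Banach spaces.**  If `X` is a real or complex Banach
space and `φ` is a bijection of the set `I₁(X)` of rank-one idempotents onto itself
satisfying `tr (φ P * φ Q) = tr (P * Q)` (where for `P = x ⊗ f`, `Q = y ⊗ g` one has
`tr (P * Q) = f y * g x`), then either `φ P = A P A⁻¹` for a bijective bounded linear
operator `A : X → X`, or `φ P = C P' C⁻¹` for a bijective bounded linear operator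
`C : X' → X`, where `P'` is the Banach-space adjoint of `P`. -/
theorem wigner_type_banach {𝕜 X : Type*} [RCLike 𝕜] [NormedAddCommGroup X]
    [NormedSpace 𝕜 X] [CompleteSpace X]
    (φ : (X →L[𝕜] X) → (X →L[𝕜] X))
    (hbij : Set.BijOn φ (rankOneIdempotents 𝕜 X) (rankOneIdempotents 𝕜 X))
    (htr : ∀ (x y : X) (f g : X →L[𝕜] 𝕜) (x' y' : X) (f' g' : X →L[𝕜] 𝕜),
      f x = 1 → g y = 1 → f' x' = 1 → g' y' = 1 →
      φ (f.smulRight x) = f'.smulRight x' → φ (g.smulRight y) = g'.smulRight y' →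
      f' y' * g' x' = f y * g x) :
    (∃ A : X →L[𝕜] X, Function.Bijective A ∧
      ∀ P ∈ rankOneIdempotents 𝕜 X, φ P ∘L A = A ∘L P) ∨
    (∃ C : (X →L[𝕜] 𝕜) →L[𝕜] X, Function.Bijective C ∧
      ∀ P ∈ rankOneIdempotents 𝕜 X, φ P ∘L C = C ∘L banachDualMap P) := by
  exact wigner_type_banach' φ hbij htr
end

section
/- Let X be a complex Banach space and let φ : I₁(X) → I₁(X) be a bijective map such that tr(φ(P)φ(Q)) = tr(PQ) for all P, Q ∈ I₁(X). If P₁, …, Pₙ ∈ I₁(X) and scalars λ₁, …, λₙ ∈ ℂ satisfy λ₁P₁ + ⋯ + λₙPₙ = 0 (as an operator on X), then λ₁φ(P₁) + ⋯ + λₙφ(Pₙ) = 0. -/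
open ContinuousLinearMap

/-- If `X` is a complex Banach space and `φ` is a bijection of the set of rank-one
idempotents onto itself preserving the trace of products, then `φ` preserves
vanishing linear combinations: `∑ λᵢ Pᵢ = 0` implies `∑ λᵢ φ(Pᵢ) = 0`. -/
theorem wigner_type_banach_lin_comb {X : Type*} [NormedAddCommGroup X]
    [NormedSpace ℂ X] [CompleteSpace X]
    (φ : (X →L[ℂ] X) → (X →L[ℂ] X))
    (hbij : Set.BijOn φ (rankOneIdempotents ℂ X) (rankOneIdempotents ℂ X))
    (htr : ∀ (x y : X) (f g : X →L[ℂ] ℂ) (x' y' : X) (f' g' : X →L[ℂ] ℂ),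
      f x = 1 → g y = 1 → f' x' = 1 → g' y' = 1 →
      φ (f.smulRight x) = f'.smulRight x' → φ (g.smulRight y) = g'.smulRight y' →
      f' y' * g' x' = f y * g x)
    (n : ℕ) (P : Fin n → (X →L[ℂ] X)) (hP : ∀ i, P i ∈ rankOneIdempotents ℂ X)
    (lam : Fin n → ℂ) (hzero : ∑ i, lam i • P i = 0) :
    ∑ i, lam i • φ (P i) = 0 := by
  classical
  choose x f hfx hPi using hP
  have hφmem : ∀ i, φ (P i) ∈ rankOneIdempotents ℂ X := fun i => hbij.mapsTo ⟨x i, f i, hfx i, hPi i⟩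
  choose x' f' hfx' hφPi using hφmem
  set T := ∑ i, lam i • φ (P i) with hT
  have key : ∀ (y' : X) (g' : X →L[ℂ] ℂ), g' y' = 1 → g' (T y') = 0 := by
    intro y' g' hg'
    have hmem : (g'.smulRight y') ∈ rankOneIdempotents ℂ X := ⟨y', g', hg', rfl⟩
    obtain ⟨Q, hQ, hφQ⟩ := hbij.surjOn hmem
    obtain ⟨y, g, hgy, rfl⟩ := hQ
    have htr' : ∀ i, f' i y' * g' (x' i) = f i y * g (x i) := fun i =>
      htr (x i) y (f i) g (x' i) y' (f' i) g' (hfx i) hgy (hfx' i) hg'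
        (by rw [← hPi i, hφPi i]) hφQ
    have hz : ∑ i, lam i * (f i y * g (x i)) = 0 := by
      have h0 := congrArg (fun S : X →L[ℂ] X => g (S y)) hzero
      simpa [ContinuousLinearMap.sum_apply, hPi, smulRight_apply, smul_smul,
        mul_assoc] using h0
    calc g' (T y') = ∑ i, lam i * (f' i y' * g' (x' i)) := by
          simp [hT, ContinuousLinearMap.sum_apply, hφPi, smulRight_apply, smul_smul,
            mul_assoc]
      _ = ∑ i, lam i * (f i y * g (x i)) := by
          refine Finset.sum_congr rfl fun i _ => by rw [htr' i]
      _ = 0 := hz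
  have hTy : ∀ y : X, T y = 0 := by
    intro y
    by_cases hy : y = 0
    · simp [hy]
    obtain ⟨g, hg⟩ := SeparatingDual.exists_eq_one (R := ℂ) hy
    by_contra hTy0
    obtain ⟨ψ, hψ⟩ := SeparatingDual.exists_eq_one (R := ℂ) hTy0
    have h1 := key y g hg
    have h2 := key y (g + ψ - (ψ y) • g) (by simp [hg])
    simp only [ContinuousLinearMap.sub_apply, ContinuousLinearMap.add_apply,
      ContinuousLinearMap.smul_apply, smul_eq_mul, h1, hψ] at h2
    simp at h2
  ext y
  simp [hTy y]
end

section
/- Let 𝔽 be a field of characteristic different from 2 and n ∈ ℕ. If φ : I₁(𝔽ⁿ) → I₁(𝔽ⁿ) satisfies tr(φ(P)φ(Q)) = tr(PQ) for all P, Q ∈ I₁(𝔽ⁿ), then the range of φ linearly spans Mₙ(𝔽); that is, the 𝔽-linear span of {φ(P) : P ∈ I₁(𝔽ⁿ)} is all of Mₙ(𝔽). -/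
/-- The set of rank-one idempotent `n × n` matrices over a field `𝔽`. -/
def matrixRankOneIdempotents (𝔽 : Type*) [Field 𝔽] (n : ℕ) :
    Set (Matrix (Fin n) (Fin n) 𝔽) :=
  {P | P * P = P ∧ P.rank = 1}

open Matrix

section Aux

variable {𝔽 : Type*} [Field 𝔽] {n : ℕ}

lemma aux_trace_mul_std (i j : Fin n) (X : Matrix (Fin n) (Fin n) 𝔽) :
    (X * single j i 1).trace = X i j := by
  classical
  simp [Matrix.trace, Matrix.mul_apply, Matrix.single, Matrix.diag,
    Matrix.of_apply, ite_and, Finset.sum_ite_eq, Finset.sum_ite_eq', eq_comm]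

lemma aux_nondeg (X : Matrix (Fin n) (Fin n) 𝔽)
    (h : ∀ Y : Matrix (Fin n) (Fin n) 𝔽, (X * Y).trace = 0) : X = 0 := by
  ext i j
  have := h (single j i 1)
  rw [aux_trace_mul_std] at this
  simpa using this

lemma aux_rank_E (i : Fin n) : (single i i (1:𝔽)).rank = 1 := by
  classical
  have h : single i i (1:𝔽) = diagonal (Pi.single i 1) := by
    ext k l
    rcases eq_or_ne k l with rfl | hk
    · rcases eq_or_ne i k with rfl | hik
      · simp [single, diagonal]
      · simp [single, diagonal, Pi.single_apply, hik, Ne.symm hik]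
    · have : ¬(i = k ∧ i = l) := by rintro ⟨rfl, rfl⟩; exact hk rfl
      simp [single, diagonal, hk, this]
  rw [h, rank_diagonal]
  rw [Fintype.card_eq_one_iff]
  refine ⟨⟨i, by simp⟩, ?_⟩
  rintro ⟨k, hk⟩
  simp only [Subtype.mk.injEq]
  by_contra hki
  exact hk (Pi.single_eq_of_ne (fun h => hki h) 1)

lemma aux_mem_diag (i : Fin n) :
    single i i (1:𝔽) ∈ matrixRankOneIdempotents 𝔽 n :=
  ⟨by rw [single_mul_single_same, mul_one], aux_rank_E i⟩

lemma aux_mem_off {i j : Fin n} (hij : i ≠ j) :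
    single i i (1:𝔽) + single i j 1 ∈ matrixRankOneIdempotents 𝔽 n := by
  have hEE : single i j (1:𝔽) * single i j 1 = 0 :=
    single_mul_single_of_ne _ _ _ _ hij.symm _
  have hEI : single i j (1:𝔽) * single i i 1 = 0 :=
    single_mul_single_of_ne _ _ _ _ hij.symm _
  constructor
  · rw [add_mul, mul_add, mul_add, single_mul_single_same, single_mul_single_same,
      hEE, hEI, mul_one]
    abel
  · have key : single i i (1:𝔽) + single i j 1 =
        single i i 1 * (1 + single i j 1) := by
      rw [mul_add, mul_one, single_mul_single_same, mul_one]
    have hinv : (1 + single i j (1:𝔽)) * (1 - single i j 1) = 1 := by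
      rw [mul_sub, mul_one, add_mul, one_mul, hEE]
      abel
    have : Invertible (1 + single i j (1:𝔽)) :=
      invertibleOfRightInverse _ _ hinv
    have hdet : IsUnit (1 + single i j (1:𝔽)).det :=
      Matrix.isUnit_iff_isUnit_det _ |>.mp (isUnit_of_invertible _)
    rw [key, rank_mul_eq_left_of_isUnit_det _ _ hdet, aux_rank_E]

end Aux

/-- Let `𝔽` be a field of characteristic different from `2`.  If `φ` maps the set of
rank-one idempotents in `Mₙ(𝔽)` into itself and preserves the trace of products, then
the range of `φ` linearly spans `Mₙ(𝔽)`. -/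
theorem wigner_type_matrix_range_spans {𝔽 : Type*} [Field 𝔽] (h2 : (2 : 𝔽) ≠ 0) (n : ℕ)
    (φ : Matrix (Fin n) (Fin n) 𝔽 → Matrix (Fin n) (Fin n) 𝔽)
    (hmaps : Set.MapsTo φ (matrixRankOneIdempotents 𝔽 n) (matrixRankOneIdempotents 𝔽 n))
    (htr : ∀ P ∈ matrixRankOneIdempotents 𝔽 n, ∀ Q ∈ matrixRankOneIdempotents 𝔽 n,
      (φ P * φ Q).trace = (P * Q).trace) :
    Submodule.span 𝔽 (φ '' matrixRankOneIdempotents 𝔽 n) = ⊤ := by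
  classical
  rcases Nat.eq_zero_or_pos n with rfl | hn
  · have : Subsingleton (Matrix (Fin 0) (Fin 0) 𝔽) :=
      ⟨fun a b => by ext i; exact i.elim0⟩
    exact Subsingleton.elim _ _
  set S := matrixRankOneIdempotents 𝔽 n with hS
  let B : Fin n × Fin n → Matrix (Fin n) (Fin n) 𝔽 := fun p =>
    if p.1 = p.2 then single p.1 p.1 1
    else single p.1 p.1 1 + single p.1 p.2 1
  have hBS : ∀ p, B p ∈ S := by
    intro p
    by_cases h : p.1 = p.2
    · simpa [B, h] using aux_mem_diag (𝔽 := 𝔽) p.1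
    · simpa [B, h] using aux_mem_off (𝔽 := 𝔽) h
  have hstd : ∀ i j : Fin n,
      single i j (1:𝔽) ∈ Submodule.span 𝔽 (Set.range B) := by
    intro i j
    by_cases h : i = j
    · subst h
      exact Submodule.subset_span ⟨(i, i), by simp [B]⟩
    · have h1 : B (i, j) ∈ Submodule.span 𝔽 (Set.range B) :=
        Submodule.subset_span ⟨(i, j), rfl⟩
      have h2 : B (i, i) ∈ Submodule.span 𝔽 (Set.range B) :=
        Submodule.subset_span ⟨(i, i), rfl⟩
      have heq : single i j (1:𝔽) = B (i, j) - B (i, i) := by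
        simp [B, h]
      rw [heq]
      exact Submodule.sub_mem _ h1 h2
  have hspanB : ⊤ ≤ Submodule.span 𝔽 (Set.range B) := by
    intro x _
    rw [matrix_eq_sum_single x]
    refine Submodule.sum_mem _ fun i _ => Submodule.sum_mem _ fun j _ => ?_
    have : single i j (x i j) = x i j • single i j (1:𝔽) := by
      rw [smul_single, smul_eq_mul, mul_one]
    rw [this]
    exact Submodule.smul_mem _ _ (hstd i j)
  have hcard : Fintype.card (Fin n × Fin n) =
      Module.finrank 𝔽 (Matrix (Fin n) (Fin n) 𝔽) := by
    simp [Module.finrank_matrix]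
  let b := basisOfTopLeSpanOfCardEqFinrank B hspanB hcard
  have hBli : LinearIndependent 𝔽 B := by
    have := b.linearIndependent
    rwa [coe_basisOfTopLeSpanOfCardEqFinrank] at this
  let v : Fin n × Fin n → Matrix (Fin n) (Fin n) 𝔽 := fun p => φ (B p)
  have hvli : LinearIndependent 𝔽 v := by
    rw [Fintype.linearIndependent_iff]
    intro g hg
    set X : Matrix (Fin n) (Fin n) 𝔽 := ∑ p, g p • B p with hX
    have hXq : ∀ q : Fin n × Fin n, (X * B q).trace = 0 := by
      intro q
      have h0 : ((∑ p, g p • v p) * v q).trace = 0 := by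
        rw [hg, zero_mul, trace_zero]
      calc (X * B q).trace = ∑ p, g p * (B p * B q).trace := by
            simp [hX, Finset.sum_mul, smul_mul_assoc, trace_sum, trace_smul, smul_eq_mul]
        _ = ∑ p, g p * (v p * v q).trace := by
            refine Finset.sum_congr rfl fun p _ => ?_
            rw [htr _ (hBS p) _ (hBS q)]
        _ = ((∑ p, g p • v p) * v q).trace := by
            simp [Finset.sum_mul, smul_mul_assoc, trace_sum, trace_smul, smul_eq_mul]
        _ = 0 := h0
    have hXall : ∀ Y : Matrix (Fin n) (Fin n) 𝔽, (X * Y).trace = 0 := by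
      intro Y
      have hY : Y ∈ Submodule.span 𝔽 (Set.range B) := hspanB Submodule.mem_top
      induction hY using Submodule.span_induction with
      | mem y hy => obtain ⟨q, rfl⟩ := hy; exact hXq q
      | zero => simp
      | add y z _ _ hy hz => rw [mul_add, trace_add, hy, hz, add_zero]
      | smul c y _ hy => rw [mul_smul_comm, trace_smul, hy, smul_zero]
    have hX0 : X = 0 := aux_nondeg X hXall
    exact Fintype.linearIndependent_iff.mp hBli g (hX.symm.trans hX0)
  have hfr : Module.finrank 𝔽 (Submodule.span 𝔽 (Set.range v)) =
      Module.finrank 𝔽 (Matrix (Fin n) (Fin n) 𝔽) := by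
    rw [finrank_span_eq_card hvli, hcard]
  have htop : Submodule.span 𝔽 (Set.range v) = ⊤ :=
    Submodule.eq_top_of_finrank_eq hfr
  rw [eq_top_iff, ← htop]
  apply Submodule.span_mono
  rintro _ ⟨p, rfl⟩
  exact ⟨B p, hBS p, rfl⟩
end

section
/- Let 𝔽 be a field of characteristic different from 2 and n ∈ ℕ. If φ : I₁(𝔽ⁿ) → I₁(𝔽ⁿ) satisfies tr(φ(P)φ(Q)) = tr(PQ) for all P, Q ∈ I₁(𝔽ⁿ), then φ extends to a linear map: there exists an 𝔽-linear map Φ : Mₙ(𝔽) → Mₙ(𝔽) such that Φ(P) = φ(P) for every P ∈ I₁(𝔽ⁿ). Equivalently, whenever rank-one idempotents Pᵢ, Qⱼ and scalars λᵢ, μⱼ satisfy ∑ᵢ λᵢPᵢ = ∑ⱼ μⱼQⱼ, one has ∑ᵢ λᵢφ(Pᵢ) = ∑ⱼ μⱼφ(Qⱼ). -/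
open Matrix Module

section Aux

variable {𝔽 : Type*} [Field 𝔽] {n : ℕ}

private lemma wig_mulVec_vecMulVec (v w y : Fin n → 𝔽) :
    (vecMulVec v w) *ᵥ y = (w ⬝ᵥ y) • v := by
  ext r
  simp only [mulVec, dotProduct, vecMulVec_apply, Pi.smul_apply, smul_eq_mul]
  rw [Finset.sum_mul]
  exact Finset.sum_congr rfl fun c _ => by ring

private lemma wig_vecMulVec_mul (v w v' w' : Fin n → 𝔽) :
    vecMulVec v w * vecMulVec v' w' = (w ⬝ᵥ v') • vecMulVec v w' := by
  ext r s
  simp only [Matrix.mul_apply, vecMulVec_apply, Matrix.smul_apply, smul_eq_mul, dotProduct]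
  rw [Finset.sum_mul]
  exact Finset.sum_congr rfl fun c _ => by ring

private lemma wig_rank_vecMulVec_one {v w : Fin n → 𝔽} (hv : v ≠ 0) (hw : w ≠ 0) :
    (vecMulVec v w).rank = 1 := by
  have hr : LinearMap.range (vecMulVec v w).mulVecLin = 𝔽 ∙ v := by
    apply le_antisymm
    · rintro x ⟨y, rfl⟩
      rw [mulVecLin_apply, wig_mulVec_vecMulVec]
      exact Submodule.smul_mem _ _ (Submodule.mem_span_singleton_self v)
    · rw [Submodule.span_singleton_le_iff_mem]
      obtain ⟨c, hc⟩ : ∃ c, w c ≠ 0 := by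
        by_contra h
        push_neg at h
        exact hw (funext fun c => h c)
      have hy : ((vecMulVec v w).mulVecLin) ((w c)⁻¹ • (Pi.single c 1 : Fin n → 𝔽)) = v := by
        rw [mulVecLin_apply, wig_mulVec_vecMulVec, dotProduct_smul, dotProduct_single,
          smul_eq_mul, mul_one, inv_mul_cancel₀ hc, one_smul]
      exact ⟨_, hy⟩
  rw [Matrix.rank, hr, finrank_span_singleton hv]

/-- The second vector of the spanning family of rank-one idempotents. -/
private noncomputable def wigW (p : Fin n × Fin n) : Fin n → 𝔽 :=
  if p.1 = p.2 then Pi.single p.1 1 else Pi.single p.1 1 + Pi.single p.2 1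

/-- A spanning family of rank-one idempotents. -/
private noncomputable def wigB (p : Fin n × Fin n) : Matrix (Fin n) (Fin n) 𝔽 :=
  vecMulVec (Pi.single p.1 1) (wigW p)

private lemma wigW_diag (i : Fin n) : (wigW (i, i) : Fin n → 𝔽) = Pi.single i 1 :=
  if_pos rfl

private lemma wigW_ne {i j : Fin n} (h : i ≠ j) :
    (wigW (i, j) : Fin n → 𝔽) = Pi.single i 1 + Pi.single j 1 :=
  if_neg h

private lemma wigW_fst (p : Fin n × Fin n) : (wigW p : Fin n → 𝔽) p.1 = 1 := by
  rcases eq_or_ne p.1 p.2 with h | h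
  · simp [wigW, h]
  · simp [wigW, h, Pi.single_eq_of_ne h.symm]

private lemma wigB_mem (p : Fin n × Fin n) :
    wigB p ∈ matrixRankOneIdempotents 𝔽 n := by
  have hv : (Pi.single p.1 1 : Fin n → 𝔽) ≠ 0 := fun h => by
    have := congrFun h p.1
    simp at this
  have hw : (wigW p : Fin n → 𝔽) ≠ 0 := fun h => by
    have := congrFun h p.1
    rw [wigW_fst] at this
    simp at this
  have hdot : (wigW p : Fin n → 𝔽) ⬝ᵥ Pi.single p.1 1 = 1 := by
    rw [dotProduct_single, mul_one, wigW_fst]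
  refine ⟨?_, wig_rank_vecMulVec_one hv hw⟩
  rw [wigB, wig_vecMulVec_mul, hdot, one_smul]

private lemma wigB_span :
    ⊤ ≤ Submodule.span 𝔽 (Set.range (wigB : Fin n × Fin n → Matrix (Fin n) (Fin n) 𝔽)) := by
  intro A _
  have hE : ∀ i j : Fin n, Matrix.single i j (1 : 𝔽) ∈
      Submodule.span 𝔽 (Set.range (wigB : Fin n × Fin n → Matrix (Fin n) (Fin n) 𝔽)) := by
    intro i j
    rcases eq_or_ne i j with rfl | h
    · have : Matrix.single i i (1 : 𝔽) = wigB (i, i) := by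
        rw [Matrix.single_eq_single_vecMulVec_single, wigB, wigW_diag]
      rw [this]
      exact Submodule.subset_span ⟨(i, i), rfl⟩
    · have : Matrix.single i j (1 : 𝔽) = wigB (i, j) - wigB (i, i) := by
        rw [Matrix.single_eq_single_vecMulVec_single, wigB, wigB, wigW_ne h, wigW_diag]
        ext r s
        simp only [vecMulVec_apply, Matrix.sub_apply, Pi.add_apply]
        ring
      rw [this]
      exact sub_mem (Submodule.subset_span ⟨(i, j), rfl⟩)
        (Submodule.subset_span ⟨(i, i), rfl⟩)
  have := Matrix.matrix_eq_sum_single A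
  rw [this]
  refine Submodule.sum_mem _ fun i _ => Submodule.sum_mem _ fun j _ => ?_
  have : Matrix.single i j (A i j) = A i j • Matrix.single i j (1 : 𝔽) := by
    rw [Matrix.smul_single, smul_eq_mul, mul_one]
  rw [this]
  exact Submodule.smul_mem _ _ (hE i j)

private lemma wig_card_eq :
    Fintype.card (Fin n × Fin n) = finrank 𝔽 (Matrix (Fin n) (Fin n) 𝔽) := by
  simp [Module.finrank_matrix]

/-- Nondegeneracy of the trace form restricted to a spanning family. -/
private lemma wig_trace_eq_zero {ι : Type*} (f : ι → Matrix (Fin n) (Fin n) 𝔽)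
    (hspan : ⊤ ≤ Submodule.span 𝔽 (Set.range f))
    (D : Matrix (Fin n) (Fin n) 𝔽) (h : ∀ i, (D * f i).trace = 0) : D = 0 := by
  have hall : ∀ X : Matrix (Fin n) (Fin n) 𝔽, (D * X).trace = 0 := by
    have hL : (Matrix.traceLinearMap (Fin n) 𝔽 𝔽).comp (LinearMap.mulLeft 𝔽 D) = 0 := by
      apply LinearMap.ext_on_range (le_antisymm le_top hspan)
      intro i
      simpa using h i
    intro X
    simpa using LinearMap.congr_fun hL X
  ext i j
  have := hall (Matrix.single j i 1)
  rw [Matrix.trace_mul_comm] at this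
  classical
  simpa [Matrix.trace, Matrix.diag, Matrix.mul_apply, Matrix.single, ite_and,
    Finset.sum_ite_eq] using this

private lemma wig_trace_sum_mul {ι : Type*} [Fintype ι] (g : ι → 𝔽)
    (A : ι → Matrix (Fin n) (Fin n) 𝔽) (B : Matrix (Fin n) (Fin n) 𝔽) :
    ((∑ p, g p • A p) * B).trace = ∑ p, g p * (A p * B).trace := by
  rw [Finset.sum_mul, trace_sum]
  exact Finset.sum_congr rfl fun p _ => by rw [smul_mul_assoc, trace_smul, smul_eq_mul]

end Aux

/-- Let `𝔽` be a field of characteristic different from `2`.  If `φ` maps the set of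
rank-one idempotents in `Mₙ(𝔽)` into itself and preserves the trace of products, then
`φ` extends to an `𝔽`-linear map `Φ : Mₙ(𝔽) → Mₙ(𝔽)`; equivalently, whenever
`∑ᵢ λᵢ Pᵢ = ∑ⱼ μⱼ Qⱼ` for rank-one idempotents `Pᵢ, Qⱼ`, one has
`∑ᵢ λᵢ φ(Pᵢ) = ∑ⱼ μⱼ φ(Qⱼ)`. -/
theorem wigner_type_matrix_linear_extension {𝔽 : Type*} [Field 𝔽] (h2 : (2 : 𝔽) ≠ 0)
    (n : ℕ) (φ : Matrix (Fin n) (Fin n) 𝔽 → Matrix (Fin n) (Fin n) 𝔽)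
    (hmaps : Set.MapsTo φ (matrixRankOneIdempotents 𝔽 n) (matrixRankOneIdempotents 𝔽 n))
    (htr : ∀ P ∈ matrixRankOneIdempotents 𝔽 n, ∀ Q ∈ matrixRankOneIdempotents 𝔽 n,
      (φ P * φ Q).trace = (P * Q).trace) :
    (∃ Φ : Matrix (Fin n) (Fin n) 𝔽 →ₗ[𝔽] Matrix (Fin n) (Fin n) 𝔽,
      ∀ P ∈ matrixRankOneIdempotents 𝔽 n, Φ P = φ P) ∧
    (∀ (k m : ℕ) (P : Fin k → Matrix (Fin n) (Fin n) 𝔽)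
        (Q : Fin m → Matrix (Fin n) (Fin n) 𝔽) (lam : Fin k → 𝔽) (mu : Fin m → 𝔽),
      (∀ i, P i ∈ matrixRankOneIdempotents 𝔽 n) →
      (∀ j, Q j ∈ matrixRankOneIdempotents 𝔽 n) →
      ∑ i, lam i • P i = ∑ j, mu j • Q j →
      ∑ i, lam i • φ (P i) = ∑ j, mu j • φ (Q j)) := by
  classical
  -- the basis of rank-one idempotents
  let b : Basis (Fin n × Fin n) 𝔽 (Matrix (Fin n) (Fin n) 𝔽) :=
    basisOfTopLeSpanOfCardEqFinrank wigB wigB_span wig_card_eq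
  have hb : ⇑b = wigB := coe_basisOfTopLeSpanOfCardEqFinrank _ _ _
  -- the images φ(wigB p) are linearly independent, hence span everything
  have hindep : LinearIndependent 𝔽 (fun p => φ (wigB p) :
      Fin n × Fin n → Matrix (Fin n) (Fin n) 𝔽) := by
    rw [Fintype.linearIndependent_iff]
    intro g hg
    have hT : (∑ p, g p • wigB p : Matrix (Fin n) (Fin n) 𝔽) = 0 := by
      apply wig_trace_eq_zero wigB wigB_span
      intro q
      rw [wig_trace_sum_mul]
      have : ∀ p, g p * ((wigB p : Matrix (Fin n) (Fin n) 𝔽) * wigB q).trace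
          = g p * (φ (wigB p) * φ (wigB q)).trace := fun p => by
        rw [htr _ (wigB_mem p) _ (wigB_mem q)]
      rw [Finset.sum_congr rfl fun p _ => this p, ← wig_trace_sum_mul, hg, Matrix.zero_mul,
        trace_zero]
    intro p
    have := Fintype.linearIndependent_iff.mp (hb ▸ b.linearIndependent) g hT
    exact this p
  have himgspan : ⊤ ≤ Submodule.span 𝔽
      (Set.range (fun p => φ (wigB p) : Fin n × Fin n → Matrix (Fin n) (Fin n) 𝔽)) :=
    (hindep.span_eq_top_of_card_eq_finrank' wig_card_eq).ge
  -- the linear extension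
  let Φ : Matrix (Fin n) (Fin n) 𝔽 →ₗ[𝔽] Matrix (Fin n) (Fin n) 𝔽 :=
    b.constr 𝔽 (fun p => φ (wigB p))
  have hΦ : ∀ P ∈ matrixRankOneIdempotents 𝔽 n, Φ P = φ P := by
    intro P hP
    have hsub : Φ P - φ P = 0 := by
      apply wig_trace_eq_zero (fun p => φ (wigB p)) himgspan
      intro q
      rw [Matrix.sub_mul, trace_sub]
      have hΦP : Φ P = ∑ p, b.equivFun P p • φ (wigB p) := b.constr_apply_fintype 𝔽 _ P
      rw [hΦP, wig_trace_sum_mul]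
      have h1 : ∀ p, b.equivFun P p * (φ (wigB p) * φ (wigB q)).trace
          = b.equivFun P p * ((wigB p : Matrix (Fin n) (Fin n) 𝔽) * wigB q).trace := fun p => by
        rw [htr _ (wigB_mem p) _ (wigB_mem q)]
      rw [Finset.sum_congr rfl fun p _ => h1 p, ← wig_trace_sum_mul]
      have hrepr : (∑ p, b.equivFun P p • wigB p : Matrix (Fin n) (Fin n) 𝔽) = P := by
        conv_lhs => rw [← hb]
        exact b.sum_equivFun P
      rw [hrepr, htr _ hP _ (wigB_mem q), sub_self]
    exact sub_eq_zero.mp hsub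
  refine ⟨⟨Φ, hΦ⟩, ?_⟩
  intro k m P Q lam mu hP hQ hsum
  have h1 : ∑ i, lam i • φ (P i) = Φ (∑ i, lam i • P i) := by
    rw [map_sum]
    exact Finset.sum_congr rfl fun i _ => by rw [LinearMap.map_smul, hΦ _ (hP i)]
  have h2' : ∑ j, mu j • φ (Q j) = Φ (∑ j, mu j • Q j) := by
    rw [map_sum]
    exact Finset.sum_congr rfl fun j _ => by rw [LinearMap.map_smul, hΦ _ (hQ j)]
  rw [h1, h2', hsum]
end

section
/- Let 𝔽 be an algebraically closed field of characteristic different from 2 and n ∈ ℕ. If φ : P₁(𝔽ⁿ) → P₁(𝔽ⁿ) satisfies tr(φ(P)φ(Q)) = tr(PQ) for all P, Q ∈ P₁(𝔽ⁿ), then the range of φ linearly spans Sₙ(𝔽): the 𝔽-linear span of {φ(P) : P ∈ P₁(𝔽ⁿ)} equals the space of all symmetric n×n matrices over 𝔽. -/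
/-- The set of symmetric rank-one idempotent `n × n` matrices over a field `𝔽`. -/
def symmRankOneIdempotents (𝔽 : Type*) [Field 𝔽] (n : ℕ) :
    Set (Matrix (Fin n) (Fin n) 𝔽) :=
  {P | P.transpose = P ∧ P * P = P ∧ P.rank = 1}

namespace WignerAux

open Matrix Submodule Module

variable {𝔽 : Type*} [Field 𝔽] {n : ℕ}

/-- The rank-one projection `v vᵀ`. -/
noncomputable def projVec (v : Fin n → 𝔽) : Matrix (Fin n) (Fin n) 𝔽 :=
  Matrix.of fun i j => v i * v j

lemma projVec_mulVec (v x : Fin n → 𝔽) :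
    (projVec v).mulVec x = (v ⬝ᵥ x) • v := by
  funext i
  simp [projVec, Matrix.mulVec, dotProduct, Finset.sum_mul, Finset.mul_sum]
  ring_nf

lemma projVec_mem (v : Fin n → 𝔽) (hv : ∑ i, v i * v i = 1) :
    projVec v ∈ symmRankOneIdempotents 𝔽 n := by
  have hv0 : v ≠ 0 := by
    rintro rfl
    simp at hv
  refine ⟨?_, ?_, ?_⟩
  · ext i j; simp [projVec, Matrix.transpose_apply, mul_comm]
  · ext i j
    simp only [Matrix.mul_apply, projVec, Matrix.of_apply]
    calc ∑ k, v i * v k * (v k * v j) = (∑ k, v k * v k) * (v i * v j) := by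
          rw [Finset.sum_mul]; exact Finset.sum_congr rfl fun k _ => by ring
      _ = v i * v j := by rw [hv, one_mul]
  · have hrange : LinearMap.range (projVec v).mulVecLin = Submodule.span 𝔽 {v} := by
      apply le_antisymm
      · rintro _ ⟨x, rfl⟩
        rw [Matrix.mulVecLin_apply, projVec_mulVec]
        exact Submodule.smul_mem _ _ (Submodule.mem_span_singleton_self v)
      · rw [Submodule.span_singleton_le_iff_mem]
        refine ⟨v, ?_⟩
        rw [Matrix.mulVecLin_apply, projVec_mulVec]
        simp [dotProduct, hv]
    rw [Matrix.rank, hrange]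
    exact finrank_span_singleton hv0

end WignerAux

namespace WignerAux

open Matrix Submodule Module

variable {𝔽 : Type*} [Field 𝔽] {n : ℕ}

/-- The submodule of symmetric matrices. -/
def symmSubmodule (𝔽 : Type*) [Field 𝔽] (n : ℕ) :
    Submodule 𝔽 (Matrix (Fin n) (Fin n) 𝔽) where
  carrier := {A | A.transpose = A}
  add_mem' ha hb := by simp_all [Matrix.transpose_add]
  zero_mem' := by simp
  smul_mem' c A hA := by simp_all [Matrix.transpose_smul]

lemma projVec_single (i : Fin n) :
    projVec (Pi.single i (1:𝔽)) = Matrix.single i i 1 := by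
  ext k l
  simp [projVec, Pi.single_apply, Matrix.single]
  by_cases hk : k = i <;> by_cases hl : l = i <;> simp_all [eq_comm]

lemma projVec_smul (c : 𝔽) (v : Fin n → 𝔽) :
    projVec (c • v) = (c * c) • projVec v := by
  ext k l; simp [projVec]; ring

lemma outer_single (i j : Fin n) :
    (Matrix.of fun k l => (Pi.single i 1 : Fin n → 𝔽) k * (Pi.single j 1 : Fin n → 𝔽) l)
      = (Matrix.single i j 1 : Matrix (Fin n) (Fin n) 𝔽) := by
  rw [Matrix.single_eq_of_single_single]
  ext k l
  by_cases h1 : k = i <;> simp [h1, Pi.single_apply]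

lemma projVec_add (u v : Fin n → 𝔽) :
    projVec (u + v) = projVec u + projVec v
      + Matrix.of (fun k l => u k * v l) + Matrix.of (fun k l => v k * u l) := by
  ext k l
  simp only [projVec, Matrix.of_apply, Matrix.add_apply, Pi.add_apply]
  ring

lemma dot_single (i j : Fin n) :
    ∑ k, (Pi.single i 1 : Fin n → 𝔽) k * (Pi.single j 1 : Fin n → 𝔽) k = if i = j then 1 else 0 := by
  have : ∑ k, (Pi.single i 1 : Fin n → 𝔽) k * (Pi.single j 1 : Fin n → 𝔽) k
      = (Pi.single i 1 : Fin n → 𝔽) ⬝ᵥ (Pi.single j 1 : Fin n → 𝔽) := rfl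
  rw [this, dotProduct_single, mul_one, Pi.single_apply]
  simp [eq_comm]

lemma pair_mem_span {𝔽 : Type*} [Field 𝔽] [IsAlgClosed 𝔽] (h2 : (2:𝔽) ≠ 0)
    {n : ℕ} (i j : Fin n) :
    Matrix.single i j (1:𝔽) + Matrix.single j i 1 ∈
      Submodule.span 𝔽 (symmRankOneIdempotents 𝔽 n) := by
  have hei : ∀ k : Fin n, projVec ((Pi.single k 1 : Fin n → 𝔽)) ∈
      Submodule.span 𝔽 (symmRankOneIdempotents 𝔽 n) := fun k =>
    Submodule.subset_span (projVec_mem _ (by rw [dot_single]; simp))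
  by_cases hij : i = j
  · subst hij
    have : Matrix.single i i (1:𝔽) + Matrix.single i i 1
        = (2:𝔽) • projVec ((Pi.single i 1 : Fin n → 𝔽)) := by
      rw [projVec_single, two_smul]
    rw [this]
    exact Submodule.smul_mem _ _ (hei i)
  · obtain ⟨c, hc⟩ := IsAlgClosed.exists_pow_nat_eq ((2:𝔽)⁻¹) zero_lt_two
    have hc2 : c * c = (2:𝔽)⁻¹ := by rw [← sq]; exact hc
    set a : Fin n → 𝔽 := (Pi.single i 1 : Fin n → 𝔽) + (Pi.single j 1 : Fin n → 𝔽) with ha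
    have haa : ∑ k, a k * a k = 2 := by
      have expand : ∀ k, a k * a k =
          (Pi.single i 1 : Fin n → 𝔽) k * (Pi.single i 1 : Fin n → 𝔽) k
          + (Pi.single i 1 : Fin n → 𝔽) k * (Pi.single j 1 : Fin n → 𝔽) k
          + (Pi.single j 1 : Fin n → 𝔽) k * (Pi.single i 1 : Fin n → 𝔽) k
          + (Pi.single j 1 : Fin n → 𝔽) k * (Pi.single j 1 : Fin n → 𝔽) k := by
        intro k; simp [ha]; ring
      rw [Finset.sum_congr rfl fun k _ => expand k]
      rw [Finset.sum_add_distrib, Finset.sum_add_distrib, Finset.sum_add_distrib,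
        dot_single, dot_single, dot_single, dot_single]
      simp [hij, Ne.symm hij]
      ring
    have hsum : ∑ k, (c • a) k * (c • a) k = 1 := by
      have : ∀ k, (c • a) k * (c • a) k = (c * c) * (a k * a k) := by
        intro k; simp [Pi.smul_apply, smul_eq_mul]; ring
      rw [Finset.sum_congr rfl fun k _ => this k, ← Finset.mul_sum, haa, hc2,
        inv_mul_cancel₀ h2]
    have hmem : projVec (c • a) ∈ Submodule.span 𝔽 (symmRankOneIdempotents 𝔽 n) :=
      Submodule.subset_span (projVec_mem _ hsum)
    have hexp : projVec a = Matrix.single i i 1 + Matrix.single j j 1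
        + Matrix.single i j 1 + Matrix.single j i 1 := by
      rw [ha, projVec_add, projVec_single, projVec_single, outer_single, outer_single]
    have key : Matrix.single i j (1:𝔽) + Matrix.single j i 1
        = (2:𝔽) • projVec (c • a) - projVec ((Pi.single i 1 : Fin n → 𝔽)) - projVec ((Pi.single j 1 : Fin n → 𝔽)) := by
      rw [projVec_smul, smul_smul, hc2, mul_inv_cancel₀ h2, one_smul, hexp,
        projVec_single, projVec_single]
      abel
    rw [key]
    exact Submodule.sub_mem _ (Submodule.sub_mem _ (Submodule.smul_mem _ _ hmem) (hei i)) (hei j)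


lemma trace_mul_projVec (A : Matrix (Fin n) (Fin n) 𝔽) (v : Fin n → 𝔽) :
    (A * projVec v).trace = v ⬝ᵥ A.mulVec v := by
  simp only [Matrix.trace, Matrix.diag, Matrix.mul_apply, projVec, Matrix.of_apply,
    dotProduct, Matrix.mulVec, Finset.mul_sum]
  refine Finset.sum_congr rfl fun i _ => Finset.sum_congr rfl fun k _ => by ring

lemma span_symm {𝔽 : Type*} [Field 𝔽] [IsAlgClosed 𝔽] (h2 : (2:𝔽) ≠ 0) (n : ℕ) :
    Submodule.span 𝔽 (symmRankOneIdempotents 𝔽 n) = symmSubmodule 𝔽 n := by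
  apply le_antisymm
  · rw [Submodule.span_le]
    intro P hP
    exact hP.1
  · intro A hA
    have hA' : A.transpose = A := hA
    have hAij : ∀ i j, A i j = A j i := by
      intro i j
      conv_lhs => rw [← hA']
      rfl
    have e1 : ∑ i, ∑ j, A i j • Matrix.single i j (1:𝔽) = A := by
      conv_rhs => rw [Matrix.matrix_eq_sum_single A]
      refine Finset.sum_congr rfl fun i _ => Finset.sum_congr rfl fun j _ => ?_
      rw [Matrix.smul_single, smul_eq_mul, mul_one]
    have e2 : ∑ i, ∑ j, A i j • Matrix.single j i (1:𝔽) = A := by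
      rw [Finset.sum_comm]
      conv_rhs => rw [Matrix.matrix_eq_sum_single A]
      refine Finset.sum_congr rfl fun j _ => Finset.sum_congr rfl fun i _ => ?_
      rw [Matrix.smul_single, smul_eq_mul, mul_one, hAij]
    have hrep : A = (2⁻¹:𝔽) • ∑ i, ∑ j, A i j •
        (Matrix.single i j (1:𝔽) + Matrix.single j i 1) := by
      have : ∑ i, ∑ j, A i j •
          (Matrix.single i j (1:𝔽) + Matrix.single j i 1)
          = (2:𝔽) • A := by
        calc ∑ i, ∑ j, A i j •
              (Matrix.single i j (1:𝔽) + Matrix.single j i 1)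
            = (∑ i, ∑ j, A i j • Matrix.single i j (1:𝔽))
              + ∑ i, ∑ j, A i j • Matrix.single j i (1:𝔽) := by
              rw [← Finset.sum_add_distrib]
              refine Finset.sum_congr rfl fun i _ => ?_
              rw [← Finset.sum_add_distrib]
              refine Finset.sum_congr rfl fun j _ => ?_
              rw [smul_add]
          _ = (2:𝔽) • A := by rw [e1, e2, two_smul]
      rw [this, smul_smul, inv_mul_cancel₀ h2, one_smul]
    rw [hrep]
    refine Submodule.smul_mem _ _ (Submodule.sum_mem _ fun i _ =>
      Submodule.sum_mem _ fun j _ => Submodule.smul_mem _ _ (pair_mem_span h2 i j))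

lemma eq_zero_of_trace_eq_zero {𝔽 : Type*} [Field 𝔽] [IsAlgClosed 𝔽] (h2 : (2:𝔽) ≠ 0)
    {n : ℕ} {A : Matrix (Fin n) (Fin n) 𝔽} (hA : A.transpose = A)
    (h : ∀ Q ∈ symmRankOneIdempotents 𝔽 n, (A * Q).trace = 0) : A = 0 := by
  have hAij : ∀ i j, A i j = A j i := by
    intro i j
    conv_lhs => rw [← hA]
    rfl
  have htp : ∀ v : Fin n → 𝔽, (∑ k, v k * v k = 1) → v ⬝ᵥ A.mulVec v = 0 := by
    intro v hv
    rw [← trace_mul_projVec]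
    exact h _ (projVec_mem v hv)
  have hdiag : ∀ j, A j j = 0 := by
    intro j
    have := htp (Pi.single j 1 : Fin n → 𝔽) (by rw [dot_single]; simp)
    rwa [Matrix.mulVec_single_one, single_dotProduct, one_mul] at this
  ext i j
  by_cases hij : i = j
  · subst hij; simp [hdiag]
  · obtain ⟨c, hc⟩ := IsAlgClosed.exists_pow_nat_eq ((2:𝔽)⁻¹) zero_lt_two
    have hc2 : c * c = (2:𝔽)⁻¹ := by rw [← sq]; exact hc
    set a : Fin n → 𝔽 := Pi.single i 1 + Pi.single j 1 with ha
    have haa : ∑ k, a k * a k = 2 := by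
      have expand : ∀ k, a k * a k =
          (Pi.single i 1 : Fin n → 𝔽) k * (Pi.single i 1 : Fin n → 𝔽) k
          + (Pi.single i 1 : Fin n → 𝔽) k * (Pi.single j 1 : Fin n → 𝔽) k
          + (Pi.single j 1 : Fin n → 𝔽) k * (Pi.single i 1 : Fin n → 𝔽) k
          + (Pi.single j 1 : Fin n → 𝔽) k * (Pi.single j 1 : Fin n → 𝔽) k := by
        intro k; simp [ha]; ring
      rw [Finset.sum_congr rfl fun k _ => expand k]
      rw [Finset.sum_add_distrib, Finset.sum_add_distrib, Finset.sum_add_distrib,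
        dot_single, dot_single, dot_single, dot_single]
      simp [hij, Ne.symm hij]
      ring
    have hsum : ∑ k, (c • a) k * (c • a) k = 1 := by
      have : ∀ k, (c • a) k * (c • a) k = (c * c) * (a k * a k) := by
        intro k; simp [Pi.smul_apply, smul_eq_mul]; ring
      rw [Finset.sum_congr rfl fun k _ => this k, ← Finset.mul_sum, haa, hc2,
        inv_mul_cancel₀ h2]
    have h0 := htp _ hsum
    have hscale : (c • a) ⬝ᵥ A.mulVec (c • a) = (c * c) * (a ⬝ᵥ A.mulVec a) := by
      rw [Matrix.mulVec_smul, smul_dotProduct, dotProduct_smul,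
        smul_eq_mul, smul_eq_mul, mul_assoc]
    have hcc : c * c ≠ 0 := by rw [hc2]; exact inv_ne_zero h2
    have h0' : a ⬝ᵥ A.mulVec a = 0 := by
      rw [hscale] at h0
      exact (mul_eq_zero.mp h0).resolve_left hcc
    have hexp : a ⬝ᵥ A.mulVec a = A i i + A i j + A j i + A j j := by
      rw [ha, Matrix.mulVec_add, add_dotProduct, dotProduct_add,
        dotProduct_add, Matrix.mulVec_single_one, Matrix.mulVec_single_one,
        single_dotProduct, single_dotProduct,
        single_dotProduct, single_dotProduct]
      show 1 * A i i + 1 * A i j + (1 * A j i + 1 * A j j) = _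
      ring
    rw [hexp, hdiag, hdiag, hAij j i] at h0'
    have h2Aij : (2:𝔽) * A i j = 0 := by rw [two_mul]; linear_combination h0'
    simp only [Matrix.zero_apply]
    exact (mul_eq_zero.mp h2Aij).resolve_left h2



end WignerAux

/-- Let `𝔽` be an algebraically closed field of characteristic different from `2`.
If `φ` maps the set of symmetric rank-one idempotents in `Mₙ(𝔽)` into itself and
preserves the trace of products, then the range of `φ` linearly spans the space
`Sₙ(𝔽)` of symmetric matrices. -/
theorem wigner_type_symm_matrix_range_spans {𝔽 : Type*} [Field 𝔽] [IsAlgClosed 𝔽]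
    (h2 : (2 : 𝔽) ≠ 0) (n : ℕ)
    (φ : Matrix (Fin n) (Fin n) 𝔽 → Matrix (Fin n) (Fin n) 𝔽)
    (hmaps : Set.MapsTo φ (symmRankOneIdempotents 𝔽 n) (symmRankOneIdempotents 𝔽 n))
    (htr : ∀ P ∈ symmRankOneIdempotents 𝔽 n, ∀ Q ∈ symmRankOneIdempotents 𝔽 n,
      (φ P * φ Q).trace = (P * Q).trace) :
    (Submodule.span 𝔽 (φ '' symmRankOneIdempotents 𝔽 n) : Set (Matrix (Fin n) (Fin n) 𝔽)) =
      {A : Matrix (Fin n) (Fin n) 𝔽 | A.transpose = A} := by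
  classical
  set s := symmRankOneIdempotents 𝔽 n with hs
  set S := WignerAux.symmSubmodule 𝔽 n with hS
  have hspan : Submodule.span 𝔽 s = S := WignerAux.span_symm h2 n
  obtain ⟨t, hts, hspan_t, hli⟩ := exists_linearIndependent 𝔽 s
  have htfin : t.Finite := hli.set_finite_of_isNoetherian
  haveI := htfin.fintype
  have hw_li : LinearIndependent 𝔽 (fun x : t => φ (x : Matrix (Fin n) (Fin n) 𝔽)) := by
    rw [Fintype.linearIndependent_iff]
    intro g hg
    have key : ∀ (f : t → Matrix (Fin n) (Fin n) 𝔽) (Q : Matrix (Fin n) (Fin n) 𝔽),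
        ((∑ x : t, g x • f x) * Q).trace = ∑ x : t, g x * (f x * Q).trace := by
      intro f Q
      rw [Finset.sum_mul, Matrix.trace_sum]
      refine Finset.sum_congr rfl fun x _ => ?_
      rw [smul_mul_assoc, Matrix.trace_smul, smul_eq_mul]
    have hA0 : (∑ x : t, g x • (x : Matrix (Fin n) (Fin n) 𝔽)) = 0 := by
      have hsymm : (∑ x : t, g x • (x : Matrix (Fin n) (Fin n) 𝔽)).transpose
          = ∑ x : t, g x • (x : Matrix (Fin n) (Fin n) 𝔽) := by
        rw [Matrix.transpose_sum]
        refine Finset.sum_congr rfl fun x _ => ?_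
        rw [Matrix.transpose_smul, (hts x.2).1]
      have htr0 : ∀ Q ∈ s, ((∑ x : t, g x • (x : Matrix (Fin n) (Fin n) 𝔽)) * Q).trace = 0 := by
        intro Q hQ
        rw [key]
        have : ∀ x : t, g x * ((x : Matrix (Fin n) (Fin n) 𝔽) * Q).trace
            = g x * (φ (x : Matrix (Fin n) (Fin n) 𝔽) * φ Q).trace := fun x => by
          rw [htr _ (hts x.2) _ hQ]
        rw [Finset.sum_congr rfl fun x _ => this x, ← key, hg, Matrix.zero_mul,
          Matrix.trace_zero]
      exact WignerAux.eq_zero_of_trace_eq_zero h2 hsymm htr0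
    exact Fintype.linearIndependent_iff.mp hli g hA0
  have hSt : Submodule.span 𝔽 t = S := by rw [hspan_t, hspan]
  have hcard : Module.finrank 𝔽 S = Fintype.card t := by
    rw [← hSt, finrank_span_set_eq_card hli, Set.toFinset_card]
  have hw_rank : Module.finrank 𝔽
      (Submodule.span 𝔽 (Set.range fun x : t => φ (x : Matrix (Fin n) (Fin n) 𝔽)))
      = Fintype.card t := finrank_span_eq_card hw_li
  have hsub : Submodule.span 𝔽 (Set.range fun x : t => φ (x : Matrix (Fin n) (Fin n) 𝔽))
      ≤ Submodule.span 𝔽 (φ '' s) :=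
    Submodule.span_mono (by rintro _ ⟨x, rfl⟩; exact ⟨x, hts x.2, rfl⟩)
  have hle : Submodule.span 𝔽 (φ '' s) ≤ S := by
    rw [Submodule.span_le]
    rintro _ ⟨P, hP, rfl⟩
    exact (hmaps hP).1
  have hfr : Module.finrank 𝔽 S ≤ Module.finrank 𝔽 (Submodule.span 𝔽 (φ '' s)) := by
    rw [hcard, ← hw_rank]
    exact Submodule.finrank_mono hsub
  have heq := Submodule.eq_of_le_of_finrank_le hle hfr
  rw [heq]
  rfl
end

section
/- Let 𝔽 be an algebraically closed field of characteristic different from 2 and n ∈ ℕ. Then the symmetric rank-one idempotents linearly generate Sₙ(𝔽): every symmetric matrix in Mₙ(𝔽) is a finite 𝔽-linear combination of matrices P with Pᵗ = P, P·P = P and rank P = 1. -/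
open Matrix

section Aux

variable {𝔽 : Type*} [Field 𝔽] {n : ℕ}

private lemma aux_rank_ne_zero {A : Matrix (Fin n) (Fin n) 𝔽} (hA : A ≠ 0) : A.rank ≠ 0 := by
  intro h
  apply hA
  have hbot : LinearMap.range A.mulVecLin = ⊥ := Submodule.finrank_eq_zero.mp h
  have hm : A.mulVecLin = 0 := LinearMap.range_eq_bot.mp hbot
  ext i j
  have := congrFun (congrArg (fun f => f (Pi.single j 1)) (congrArg DFunLike.coe hm)) i
  simpa [Matrix.mulVecLin_apply, Matrix.mulVec_single] using this

private lemma aux_rank_le_one (v w : Fin n → 𝔽) : (Matrix.vecMulVec v w).rank ≤ 1 := by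
  rw [Matrix.vecMulVec_eq Unit]
  calc (Matrix.replicateCol Unit v * Matrix.replicateRow Unit w).rank ≤ (Matrix.replicateCol Unit v).rank :=
        Matrix.rank_mul_le_left _ _
    _ ≤ Fintype.card Unit := Matrix.rank_le_card_width _
    _ = 1 := Fintype.card_unit

private lemma aux_smul_vecMulVec (c : 𝔽) (v w : Fin n → 𝔽) :
    c • Matrix.vecMulVec v w = Matrix.vecMulVec (c • v) w := by
  ext a b; simp [Matrix.vecMulVec_apply, mul_assoc]

private lemma aux_key (v : Fin n → 𝔽) (hv : v ⬝ᵥ v ≠ 0) :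
    ((v ⬝ᵥ v)⁻¹ • Matrix.vecMulVec v v) ∈
      {P : Matrix (Fin n) (Fin n) 𝔽 | P.transpose = P ∧ P * P = P ∧ P.rank = 1} := by
  set c := v ⬝ᵥ v with hc
  refine ⟨?_, ?_, ?_⟩
  · ext a b; simp [Matrix.vecMulVec_apply, mul_comm]
  · have hmul : Matrix.vecMulVec v v * Matrix.vecMulVec v v = c • Matrix.vecMulVec v v := by
      ext a b
      simp only [Matrix.mul_apply, Matrix.vecMulVec_apply, Matrix.smul_apply, smul_eq_mul, hc,
        dotProduct, Finset.sum_mul]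
      exact Finset.sum_congr rfl fun k _ => by ring
    rw [smul_mul_smul_comm, hmul, smul_smul]
    congr 1
    field_simp
  · refine le_antisymm ?_ ?_
    · rw [aux_smul_vecMulVec]; exact aux_rank_le_one _ _
    · refine Nat.one_le_iff_ne_zero.mpr (aux_rank_ne_zero ?_)
      intro h0
      apply hv
      have key : ∀ a b, (v ⬝ᵥ v)⁻¹ * (v a * v b) = 0 := by
        intro a b
        have := congrFun (congrFun h0 a) b
        simpa [Matrix.vecMulVec_apply] using this
      rw [hc, dotProduct]
      refine Finset.sum_eq_zero fun k _ => ?_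
      rcases mul_eq_zero.mp (key k k) with h | h
      · exact absurd (inv_eq_zero.mp h) hv
      · exact h

private lemma aux_single_vmv (i : Fin n) :
    Matrix.vecMulVec (Pi.single i (1:𝔽)) (Pi.single i 1) = Matrix.single i i 1 :=
  (Matrix.single_eq_single_vecMulVec_single i i).symm

private lemma aux_single_dot (i : Fin n) : (Pi.single i (1:𝔽)) ⬝ᵥ (Pi.single i 1) = 1 := by
  simp [dotProduct, Pi.single_apply]

private lemma aux_Eii_mem (i : Fin n) :
    Matrix.single i i (1:𝔽) ∈
      {P : Matrix (Fin n) (Fin n) 𝔽 | P.transpose = P ∧ P * P = P ∧ P.rank = 1} := by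
  have := aux_key (Pi.single i (1:𝔽)) (by rw [aux_single_dot]; exact one_ne_zero)
  rwa [aux_single_dot, inv_one, one_smul, aux_single_vmv] at this

private lemma aux_u_dot (i j : Fin n) (hij : i ≠ j) :
    (Pi.single i 1 + Pi.single j 1 : Fin n → 𝔽) ⬝ᵥ
      (Pi.single i 1 + Pi.single j 1 : Fin n → 𝔽) = 2 := by
  simp [add_dotProduct, dotProduct_add, dotProduct_single, single_dotProduct,
    Pi.single_apply, hij, hij.symm]
  ring

private lemma aux_u_vmv (i j : Fin n) :
    Matrix.vecMulVec (Pi.single i 1 + Pi.single j 1 : Fin n → 𝔽)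
        (Pi.single i 1 + Pi.single j 1 : Fin n → 𝔽) =
      Matrix.single i i 1 + Matrix.single i j 1 +
        Matrix.single j i 1 + Matrix.single j j 1 := by
  have expand : ∀ x y : Fin n → 𝔽, Matrix.vecMulVec (x + y) (x + y) =
      Matrix.vecMulVec x x + Matrix.vecMulVec x y +
        Matrix.vecMulVec y x + Matrix.vecMulVec y y := by
    intro x y
    refine Matrix.ext fun a b => ?_
    simp only [Matrix.vecMulVec_apply, Matrix.add_apply, Pi.add_apply]
    ring
  rw [expand, ← Matrix.single_eq_single_vecMulVec_single,
    ← Matrix.single_eq_single_vecMulVec_single,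
    ← Matrix.single_eq_single_vecMulVec_single,
    ← Matrix.single_eq_single_vecMulVec_single]

private lemma aux_pair_mem (h2 : (2:𝔽) ≠ 0) (i j : Fin n) :
    Matrix.single i j (1:𝔽) + Matrix.single j i 1 ∈
      Submodule.span 𝔽
        {P : Matrix (Fin n) (Fin n) 𝔽 | P.transpose = P ∧ P * P = P ∧ P.rank = 1} := by
  by_cases hij : i = j
  · subst hij
    have : Matrix.single i i (1:𝔽) + Matrix.single i i 1 =
        (2:𝔽) • Matrix.single i i 1 := by rw [two_smul]
    rw [this]
    exact Submodule.smul_mem _ _ (Submodule.subset_span (aux_Eii_mem i))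
  · set u : Fin n → 𝔽 := Pi.single i 1 + Pi.single j 1 with hu
    have hdot : u ⬝ᵥ u = 2 := aux_u_dot i j hij
    have hQ : ((u ⬝ᵥ u)⁻¹ • Matrix.vecMulVec u u) ∈
        {P : Matrix (Fin n) (Fin n) 𝔽 | P.transpose = P ∧ P * P = P ∧ P.rank = 1} :=
      aux_key u (by rw [hdot]; exact h2)
    have hexp : Matrix.single i j (1:𝔽) + Matrix.single j i 1 =
        (2:𝔽) • ((u ⬝ᵥ u)⁻¹ • Matrix.vecMulVec u u) -
          Matrix.single i i 1 - Matrix.single j j 1 := by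
      rw [hdot, smul_smul, mul_inv_cancel₀ h2, one_smul, aux_u_vmv i j]
      abel
    rw [hexp]
    refine Submodule.sub_mem _ (Submodule.sub_mem _ ?_ ?_) ?_
    · exact Submodule.smul_mem _ _ (Submodule.subset_span hQ)
    · exact Submodule.subset_span (aux_Eii_mem i)
    · exact Submodule.subset_span (aux_Eii_mem j)

end Aux

/-- Over an algebraically closed field `𝔽` of characteristic different from `2`, the
symmetric rank-one idempotents linearly generate `Sₙ(𝔽)`: every symmetric `n × n`
matrix is a finite `𝔽`-linear combination of matrices `P` with `Pᵀ = P`, `P * P = P`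
and `rank P = 1`. -/
theorem span_symm_rankOneIdempotents {𝔽 : Type*} [Field 𝔽] [IsAlgClosed 𝔽]
    (h2 : (2 : 𝔽) ≠ 0) (n : ℕ) :
    (Submodule.span 𝔽
        {P : Matrix (Fin n) (Fin n) 𝔽 | P.transpose = P ∧ P * P = P ∧ P.rank = 1} :
      Set (Matrix (Fin n) (Fin n) 𝔽)) =
      {A : Matrix (Fin n) (Fin n) 𝔽 | A.transpose = A} := by
  apply subset_antisymm
  · intro x hx
    induction hx using Submodule.span_induction with
    | mem P hP => exact hP.1
    | zero => simp [Set.mem_setOf_eq]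
    | add x y hx hy hx' hy' =>
        simp only [Set.mem_setOf_eq, Matrix.transpose_add] at *
        rw [hx', hy']
    | smul c x hx hx' =>
        simp only [Set.mem_setOf_eq, Matrix.transpose_smul] at *
        rw [hx']
  · intro A hA
    simp only [Set.mem_setOf_eq] at hA
    have hsum : ∑ i, ∑ j, A i j •
        (Matrix.single i j (1:𝔽) + Matrix.single j i 1) = A + A := by
      have h1 : ∑ i, ∑ j, A i j • Matrix.single i j (1:𝔽) = A := by
        conv_rhs => rw [Matrix.matrix_eq_sum_single A]
        simp [Matrix.smul_single]
      have h2' : ∑ i, ∑ j, A i j • Matrix.single j i (1:𝔽) = A := by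
        rw [Finset.sum_comm]
        conv_rhs => rw [← hA, Matrix.matrix_eq_sum_single Aᵀ]
        simp [Matrix.smul_single, Matrix.transpose_apply]
      simp only [smul_add, Finset.sum_add_distrib, h1, h2']
    have hAeq : A = (2:𝔽)⁻¹ • ∑ i, ∑ j, A i j •
        (Matrix.single i j (1:𝔽) + Matrix.single j i 1) := by
      rw [hsum, ← two_smul 𝔽 A, smul_smul, inv_mul_cancel₀ h2, one_smul]
    rw [hAeq]
    refine Submodule.smul_mem _ _ (Submodule.sum_mem _ fun i _ =>
      Submodule.sum_mem _ fun j _ => Submodule.smul_mem _ _ (aux_pair_mem h2 i j))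
end

section
/- Let 𝔽 be an algebraically closed field of characteristic different from 2 and n ∈ ℕ. If φ : P₁(𝔽ⁿ) → P₁(𝔽ⁿ) satisfies tr(φ(P)φ(Q)) = tr(PQ) for all P, Q ∈ P₁(𝔽ⁿ), then φ extends to a linear map: there exists an 𝔽-linear map Φ : Sₙ(𝔽) → Sₙ(𝔽) such that Φ(P) = φ(P) for every P ∈ P₁(𝔽ⁿ). Equivalently, whenever symmetric rank-one idempotents Pᵢ, Qⱼ and scalars λᵢ, μⱼ satisfy ∑ᵢ λᵢPᵢ = ∑ⱼ μⱼQⱼ, one has ∑ᵢ λᵢφ(Pᵢ) = ∑ⱼ μⱼφ(Qⱼ). -/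
/-- The `𝔽`-submodule `Sₙ(𝔽)` of symmetric `n × n` matrices. -/
def symmMatrices (𝔽 : Type*) [Field 𝔽] (n : ℕ) :
    Submodule 𝔽 (Matrix (Fin n) (Fin n) 𝔽) where
  carrier := {A | A.transpose = A}
  add_mem' := by
    intro a b ha hb
    simp only [Set.mem_setOf_eq] at *
    rw [Matrix.transpose_add, ha, hb]
  zero_mem' := Matrix.transpose_zero
  smul_mem' := by
    intro c a ha
    simp only [Set.mem_setOf_eq] at *
    rw [Matrix.transpose_smul, ha]

namespace WignerAux
open Matrix

variable {𝔽 : Type*} [Field 𝔽] {n : ℕ}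

lemma vecMulVec_mul_vecMulVec (u v w x : Fin n → 𝔽) :
    vecMulVec u v * vecMulVec w x = (v ⬝ᵥ w) • vecMulVec u x := by
  ext a b
  simp only [mul_apply, vecMulVec_apply, Matrix.smul_apply, dotProduct, smul_eq_mul, Finset.sum_mul]
  apply Finset.sum_congr rfl
  intros; ring

lemma trace_mul_vecMulVec (X : Matrix (Fin n) (Fin n) 𝔽) (u v : Fin n → 𝔽) :
    (X * vecMulVec u v).trace = v ⬝ᵥ (X *ᵥ u) := by
  simp only [trace, diag, mul_apply, vecMulVec_apply, dotProduct, mulVec, Finset.mul_sum]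
  apply Finset.sum_congr rfl; intros
  apply Finset.sum_congr rfl; intros; ring

/-- The vector `eᵢ + eⱼ`. -/
def wvec (i j : Fin n) : Fin n → 𝔽 := Pi.single i 1 + Pi.single j 1

lemma wvec_apply (i j a : Fin n) :
    wvec (𝔽 := 𝔽) i j a = (if a = i then 1 else 0) + (if a = j then 1 else 0) := by
  simp [wvec, Pi.single_apply]

lemma wvec_dot (i j : Fin n) :
    wvec (𝔽 := 𝔽) i j ⬝ᵥ wvec i j = if i = j then 4 else 2 := by
  simp only [dotProduct, wvec_apply]
  rcases eq_or_ne i j with rfl | hij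
  · simp only [if_pos rfl]
    rw [Finset.sum_eq_single i]
    · simp; norm_num
    · intro b _ hb; simp [hb]
    · simp
  · rw [if_neg hij, Finset.sum_eq_add_of_mem i j (Finset.mem_univ _) (Finset.mem_univ _) hij]
    · simp [hij, Ne.symm hij]; norm_num
    · intro c _ hc
      simp [hc.1, hc.2]

lemma four_ne (h2 : (2:𝔽) ≠ 0) : (4:𝔽) ≠ 0 := by
  intro h; apply h2
  have : (4 : 𝔽) = 2 * 2 := by norm_num
  rw [this] at h
  exact (mul_self_eq_zero).mp h

lemma wvec_dot_ne (h2 : (2 : 𝔽) ≠ 0) (i j : Fin n) :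
    wvec (𝔽 := 𝔽) i j ⬝ᵥ wvec i j ≠ 0 := by
  rw [wvec_dot]
  have h4 := four_ne h2
  split_ifs <;> assumption

/-- The rank-one symmetric idempotent supported on rows/columns `i, j`. -/
def bmat (i j : Fin n) : Matrix (Fin n) (Fin n) 𝔽 :=
  vecMulVec ((wvec (𝔽 := 𝔽) i j ⬝ᵥ wvec i j)⁻¹ • wvec i j) (wvec i j)

lemma bmat_apply (i j a b : Fin n) :
    bmat (𝔽 := 𝔽) i j a b = (wvec i j ⬝ᵥ wvec i j)⁻¹ * (wvec i j a * wvec i j b) := by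
  simp [bmat, vecMulVec_apply, mul_assoc]

lemma bmat_transpose (i j : Fin n) : (bmat (𝔽 := 𝔽) i j).transpose = bmat i j := by
  ext a b
  simp only [transpose_apply, bmat_apply]
  ring

lemma bmat_idem (h2 : (2 : 𝔽) ≠ 0) (i j : Fin n) :
    bmat (𝔽 := 𝔽) i j * bmat i j = bmat i j := by
  rw [bmat, vecMulVec_mul_vecMulVec, dotProduct_smul]
  rw [smul_eq_mul, inv_mul_cancel₀ (wvec_dot_ne h2 i j), one_smul]

lemma trace_mul_bmat (X : Matrix (Fin n) (Fin n) 𝔽) (i j : Fin n) :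
    (X * bmat i j).trace
      = (wvec (𝔽 := 𝔽) i j ⬝ᵥ wvec i j)⁻¹ * (X i i + X i j + X j i + X j j) := by
  rw [bmat, trace_mul_vecMulVec, mulVec_smul, dotProduct_smul, smul_eq_mul]
  congr 1
  have : X *ᵥ wvec i j = fun a => X a i + X a j := by
    funext a
    simp [wvec, mulVec_add, mulVec_single]
  rw [this]
  simp only [wvec, add_dotProduct, single_dotProduct, one_mul]
  ring

lemma bmat_rank (h2 : (2 : 𝔽) ≠ 0) (i j : Fin n) : (bmat (𝔽 := 𝔽) i j).rank = 1 := by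
  have hle : (bmat (𝔽 := 𝔽) i j).rank ≤ 1 := by
    rw [bmat, vecMulVec_eq (Fin 1)]
    calc (replicateCol (Fin 1) ((wvec i j ⬝ᵥ wvec i j)⁻¹ • wvec i j) * replicateRow (Fin 1) (wvec (𝔽:=𝔽) i j)).rank
        ≤ (replicateRow (Fin 1) (wvec (𝔽:=𝔽) i j)).rank := Matrix.rank_mul_le_right _ _
      _ ≤ Fintype.card (Fin 1) := Matrix.rank_le_card_height _
      _ = 1 := by simp
  have hne : bmat (𝔽 := 𝔽) i j ≠ 0 := by
    intro h
    have := congrFun (congrFun h i) i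
    rw [bmat_apply] at this
    simp only [Matrix.zero_apply] at this
    have hwi : wvec (𝔽 := 𝔽) i j i ≠ 0 := by
      rw [wvec_apply, if_pos rfl]
      split_ifs with h
      · rw [one_add_one_eq_two]; exact h2
      · simp
    exact (mul_ne_zero (inv_ne_zero (wvec_dot_ne h2 i j)) (mul_ne_zero hwi hwi)) this
  have hnz : (bmat (𝔽 := 𝔽) i j).rank ≠ 0 := by
    intro h
    apply hne
    rw [Matrix.rank] at h
    rw [Submodule.finrank_eq_zero] at h
    ext a b
    have : (bmat (𝔽 := 𝔽) i j) *ᵥ Pi.single b 1 = 0 := by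
      have : (bmat (𝔽 := 𝔽) i j).mulVecLin (Pi.single b 1)
          ∈ LinearMap.range (bmat (𝔽 := 𝔽) i j).mulVecLin :=
        LinearMap.mem_range_self _ _
      rw [h] at this
      simpa using this
    have := congrFun this a
    simpa [mulVec_single] using this
  omega

lemma bmat_mem (h2 : (2 : 𝔽) ≠ 0) (i j : Fin n) :
    bmat (𝔽 := 𝔽) i j ∈ symmRankOneIdempotents 𝔽 n :=
  ⟨bmat_transpose i j, bmat_idem h2 i j, bmat_rank h2 i j⟩

lemma nondeg_s12 (h2 : (2:𝔽) ≠ 0) (X : Matrix (Fin n) (Fin n) 𝔽) (hX : X.transpose = X)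
    (h : ∀ i j : Fin n, (X * bmat i j).trace = 0) : X = 0 := by
  have h' : ∀ i j : Fin n, X i i + X i j + X j i + X j j = 0 := by
    intro i j
    have := h i j
    rw [trace_mul_bmat] at this
    rcases mul_eq_zero.mp this with h' | h'
    · exact absurd h' (inv_ne_zero (wvec_dot_ne h2 i j))
    · exact h'
  have hdiag : ∀ i, X i i = 0 := by
    intro i
    have := h' i i
    have h4 : X i i + X i i + X i i + X i i = (2*2) * X i i := by ring
    rw [h4] at this
    rcases mul_eq_zero.mp this with hc | hc
    · exact absurd hc (mul_ne_zero h2 h2)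
    · exact hc
  ext a b
  rcases eq_or_ne a b with rfl | hab
  · simpa using hdiag a
  · have := h' a b
    rw [hdiag a, hdiag b] at this
    have hsymm : X b a = X a b := by
      conv_lhs => rw [← hX]
      rfl
    rw [hsymm] at this
    have : (2:𝔽) * X a b = 0 := by linear_combination this
    simpa [Matrix.zero_apply] using (mul_eq_zero.mp this).resolve_left h2

lemma bmat_diag (h2 : (2:𝔽) ≠ 0) (i : Fin n) :
    bmat (𝔽 := 𝔽) i i = single i i 1 := by
  ext a b
  rw [bmat_apply, wvec_dot, wvec_apply, wvec_apply]
  simp only [if_pos rfl, Matrix.single]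
  by_cases hai : a = i <;> by_cases hbi : b = i <;>
    simp_all [eq_comm] <;>
    (rw [show ((1:𝔽)+1)*((1:𝔽)+1) = 4 by norm_num]
     exact (inv_mul_cancel₀ (four_ne (fun h => h2 h.symm))).symm)

lemma bmat_off (h2 : (2:𝔽) ≠ 0) (i j : Fin n) (hij : i ≠ j) :
    single i j (1:𝔽) + single j i 1
      = (2:𝔽) • bmat i j - bmat i i - bmat j j := by
  ext a b
  rw [bmat_diag h2, bmat_diag h2]
  simp only [Matrix.add_apply, Matrix.sub_apply, Matrix.smul_apply, smul_eq_mul]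
  rw [bmat_apply, wvec_dot, if_neg hij, wvec_apply, wvec_apply]
  simp only [Matrix.single, Matrix.of_apply]
  by_cases hai : a = i <;> by_cases haj : a = j <;> by_cases hbi : b = i <;> by_cases hbj : b = j <;>
    simp_all [hij, Ne.symm hij, eq_comm]

lemma pair_mem_span_s12 (h2 : (2:𝔽) ≠ 0) (i j : Fin n) :
    single i j (1:𝔽) + single j i 1
      ∈ Submodule.span 𝔽 (Set.range fun p : Fin n × Fin n => bmat (𝔽 := 𝔽) p.1 p.2) := by
  have hmem : ∀ a b : Fin n, bmat (𝔽 := 𝔽) a b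
      ∈ Submodule.span 𝔽 (Set.range fun p : Fin n × Fin n => bmat (𝔽 := 𝔽) p.1 p.2) :=
    fun a b => Submodule.subset_span ⟨(a, b), rfl⟩
  rcases eq_or_ne i j with rfl | hij
  · have : single i i (1:𝔽) + single i i 1 = (2:𝔽) • bmat i i := by
      rw [bmat_diag h2, two_smul]
    rw [this]
    exact Submodule.smul_mem _ _ (hmem i i)
  · rw [bmat_off h2 i j hij]
    exact Submodule.sub_mem _ (Submodule.sub_mem _
      (Submodule.smul_mem _ _ (hmem i j)) (hmem i i)) (hmem j j)

lemma symm_mem_span (h2 : (2:𝔽) ≠ 0) (Y : Matrix (Fin n) (Fin n) 𝔽) (hY : Y.transpose = Y) :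
    Y ∈ Submodule.span 𝔽 (Set.range fun p : Fin n × Fin n => bmat (𝔽 := 𝔽) p.1 p.2) := by
  have hdecomp : Y = (2:𝔽)⁻¹ • ∑ i : Fin n, ∑ j : Fin n,
      Y i j • (single i j 1 + single j i 1) := by
    have h1 : ∑ i : Fin n, ∑ j : Fin n, Y i j • (single i j (1:𝔽)) = Y := by
      conv_rhs => rw [matrix_eq_sum_single Y]
      simp [smul_single]
    have h2' : ∑ i : Fin n, ∑ j : Fin n, Y i j • (single j i (1:𝔽)) = Y := by
      rw [Finset.sum_comm]
      conv_rhs => rw [← hY, matrix_eq_sum_single Y.transpose]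
      simp [smul_single, transpose_apply]
    have : ∑ i : Fin n, ∑ j : Fin n,
        Y i j • (single i j (1:𝔽) + single j i 1) = Y + Y := by
      simp only [smul_add, Finset.sum_add_distrib, h1, h2']
    rw [this, smul_add]
    rw [← two_smul 𝔽 ((2:𝔽)⁻¹ • Y), smul_smul, mul_inv_cancel₀ h2, one_smul]
  rw [hdecomp]
  exact Submodule.smul_mem _ _ (Submodule.sum_mem _ fun i _ => Submodule.sum_mem _ fun j _ =>
    Submodule.smul_mem _ _ (pair_mem_span_s12 h2 i j))

end WignerAux

namespace WignerAux
open Matrix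

variable {𝔽 : Type*} [Field 𝔽] {n : ℕ}

/-- Key lemma: trace-of-product preserving maps on `P₁` preserve linear relations. -/
lemma relation_preserved (h2 : (2:𝔽) ≠ 0)
    (φ : Matrix (Fin n) (Fin n) 𝔽 → Matrix (Fin n) (Fin n) 𝔽)
    (hmaps : Set.MapsTo φ (symmRankOneIdempotents 𝔽 n) (symmRankOneIdempotents 𝔽 n))
    (htr : ∀ P ∈ symmRankOneIdempotents 𝔽 n, ∀ Q ∈ symmRankOneIdempotents 𝔽 n,
      (φ P * φ Q).trace = (P * Q).trace)
    {ι : Type} [Fintype ι] (T : ι → Matrix (Fin n) (Fin n) 𝔽)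
    (hT : ∀ j, T j ∈ symmRankOneIdempotents 𝔽 n)
    (c : ι → 𝔽) (hc : ∑ j, c j • T j = 0) :
    ∑ j, c j • φ (T j) = 0 := by
  classical
  set S : Submodule 𝔽 (Matrix (Fin n) (Fin n) 𝔽) := symmMatrices 𝔽 n with hS
  -- augmented family
  set R : ι ⊕ (Fin n × Fin n) → Matrix (Fin n) (Fin n) 𝔽 :=
    Sum.elim T (fun p => bmat p.1 p.2) with hRdef
  have hR : ∀ j, R j ∈ symmRankOneIdempotents 𝔽 n := by
    rintro (j | p)
    · exact hT j
    · exact bmat_mem h2 p.1 p.2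
  have hRS : ∀ j, R j ∈ S := fun j => (hR j).1
  have hRφS : ∀ j, φ (R j) ∈ S := fun j => (hmaps (hR j)).1
  set R' : ι ⊕ (Fin n × Fin n) → S := fun j => ⟨R j, hRS j⟩ with hR'def
  set Rφ : ι ⊕ (Fin n × Fin n) → S := fun j => ⟨φ (R j), hRφS j⟩ with hRφdef
  set u : ((ι ⊕ (Fin n × Fin n)) → 𝔽) →ₗ[𝔽] S := Fintype.linearCombination 𝔽 R' with hu
  set v : ((ι ⊕ (Fin n × Fin n)) → 𝔽) →ₗ[𝔽] S := Fintype.linearCombination 𝔽 Rφ with hv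
  set e : S →ₗ[𝔽] ((ι ⊕ (Fin n × Fin n)) → 𝔽) :=
    LinearMap.pi (fun j => Matrix.traceLinearMap (Fin n) 𝔽 𝔽 ∘ₗ
      LinearMap.mulRight 𝔽 (R j) ∘ₗ (symmMatrices 𝔽 n).subtype) with he
  set e' : S →ₗ[𝔽] ((ι ⊕ (Fin n × Fin n)) → 𝔽) :=
    LinearMap.pi (fun j => Matrix.traceLinearMap (Fin n) 𝔽 𝔽 ∘ₗ
      LinearMap.mulRight 𝔽 (φ (R j)) ∘ₗ (symmMatrices 𝔽 n).subtype) with he'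
  have ucoe : ∀ d : (ι ⊕ (Fin n × Fin n)) → 𝔽,
      ((u d : S) : Matrix (Fin n) (Fin n) 𝔽) = ∑ j, d j • R j := by
    intro d
    rw [hu, Fintype.linearCombination_apply]
    push_cast
    rfl
  have vcoe : ∀ d : (ι ⊕ (Fin n × Fin n)) → 𝔽,
      ((v d : S) : Matrix (Fin n) (Fin n) 𝔽) = ∑ j, d j • φ (R j) := by
    intro d
    rw [hv, Fintype.linearCombination_apply]
    push_cast
    rfl
  have eapp : ∀ (X : S) j, e X j = ((X : Matrix (Fin n) (Fin n) 𝔽) * R j).trace := fun _ _ => rfl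
  have e'app : ∀ (X : S) j, e' X j = ((X : Matrix (Fin n) (Fin n) 𝔽) * φ (R j)).trace :=
    fun _ _ => rfl
  -- e kills only 0
  have ezero : ∀ X : S, e X = 0 → X = 0 := by
    intro X hX
    have : ∀ i j : Fin n, ((X : Matrix (Fin n) (Fin n) 𝔽) * bmat i j).trace = 0 := by
      intro i j
      have := congrFun hX (Sum.inr (i, j))
      simpa [eapp, hRdef] using this
    have : (X : Matrix (Fin n) (Fin n) 𝔽) = 0 := nondeg_s12 h2 _ X.2 this
    exact Subtype.ext this
  -- the crucial commuting square
  have hsquare : e' ∘ₗ v = e ∘ₗ u := by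
    apply LinearMap.ext
    intro d
    funext j
    simp only [LinearMap.comp_apply]
    rw [e'app, eapp, ucoe, vcoe, Finset.sum_mul, Finset.sum_mul, trace_sum, trace_sum]
    apply Finset.sum_congr rfl
    intro i _
    rw [smul_mul_assoc, smul_mul_assoc, trace_smul, trace_smul]
    congr 1
    exact htr _ (hR i) _ (hR j)
  -- u is surjective
  have husurj : LinearMap.range u = ⊤ := by
    rw [hu, Fintype.range_linearCombination]
    rw [Submodule.eq_top_iff']
    intro Y
    have hY1 : (Y : Matrix (Fin n) (Fin n) 𝔽)
        ∈ Submodule.span 𝔽 (Set.range fun p : Fin n × Fin n => bmat (𝔽 := 𝔽) p.1 p.2) :=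
      symm_mem_span h2 _ Y.2
    have hle : Submodule.span 𝔽 (Set.range fun p : Fin n × Fin n => bmat (𝔽 := 𝔽) p.1 p.2)
        ≤ (Submodule.span 𝔽 (Set.range R')).map S.subtype := by
      rw [Submodule.map_span]
      apply Submodule.span_mono
      rintro _ ⟨p, rfl⟩
      exact ⟨R' (Sum.inr p), ⟨Sum.inr p, rfl⟩, rfl⟩
    obtain ⟨Z, hZ, hZY⟩ := hle hY1
    have : Z = Y := Subtype.ext hZY
    rwa [this] at hZ
  -- kernels
  have hker1 : LinearMap.ker (e ∘ₗ u) = LinearMap.ker u := by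
    ext d
    simp only [LinearMap.mem_ker, LinearMap.comp_apply]
    constructor
    · intro h; exact ezero _ h
    · intro h; rw [h, map_zero]
  have hkerveq : LinearMap.ker v = LinearMap.ker (e' ∘ₗ v) := by
    have hle : LinearMap.ker v ≤ LinearMap.ker (e' ∘ₗ v) := by
      intro d hd
      simp only [LinearMap.mem_ker, LinearMap.comp_apply] at *
      rw [hd, map_zero]
    apply Submodule.eq_of_le_of_finrank_le hle
    -- finrank ker (e' ∘ v) ≤ finrank ker v
    have hrn1 := LinearMap.finrank_range_add_finrank_ker v
    have hrn2 := LinearMap.finrank_range_add_finrank_ker (e' ∘ₗ v)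
    have hrange : Module.finrank 𝔽 (LinearMap.range v)
        ≤ Module.finrank 𝔽 (LinearMap.range (e' ∘ₗ v)) := by
      have h1 : Module.finrank 𝔽 (LinearMap.range v) ≤ Module.finrank 𝔽 S :=
        Submodule.finrank_le _
      have h2' : Module.finrank 𝔽 (LinearMap.range (e' ∘ₗ v)) = Module.finrank 𝔽 S := by
        rw [hsquare, LinearMap.range_comp, husurj, Submodule.map_top]
        have einj : Function.Injective e := by
          rw [← LinearMap.ker_eq_bot]
          apply LinearMap.ker_eq_bot'.mpr
          intro X hX; exact ezero X hX
        exact LinearMap.finrank_range_of_inj einj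
      omega
    omega
  -- conclude
  set d : (ι ⊕ (Fin n × Fin n)) → 𝔽 := Sum.elim c 0 with hd
  have hud : u d = 0 := by
    apply Subtype.ext
    rw [ucoe]
    rw [Fintype.sum_sum_type]
    simp only [hd, Sum.elim_inl, Sum.elim_inr, Pi.zero_apply, zero_smul, Finset.sum_const_zero,
      add_zero, hRdef]
    simpa using hc
  have hvd : v d = 0 := by
    have : d ∈ LinearMap.ker u := hud
    rw [← hker1, ← hsquare, ← hkerveq] at this
    exact this
  have h0 := congrArg Subtype.val hvd
  rw [vcoe, ZeroMemClass.coe_zero, Fintype.sum_sum_type] at h0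
  simpa only [hd, Sum.elim_inl, Sum.elim_inr, Pi.zero_apply, zero_smul, Finset.sum_const_zero,
    add_zero, hRdef] using h0

end WignerAux

/-- Let `𝔽` be an algebraically closed field of characteristic different from `2`.
If `φ` maps the set `P₁(𝔽ⁿ)` of symmetric rank-one idempotents in `Mₙ(𝔽)` into itself
and preserves the trace of products, then `φ` extends to an `𝔽`-linear map
`Φ : Sₙ(𝔽) → Sₙ(𝔽)`; equivalently, whenever `∑ᵢ λᵢ Pᵢ = ∑ⱼ μⱼ Qⱼ` for symmetric
rank-one idempotents `Pᵢ, Qⱼ`, one has `∑ᵢ λᵢ φ(Pᵢ) = ∑ⱼ μⱼ φ(Qⱼ)`. -/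
theorem wigner_type_symm_matrix_linear_extension {𝔽 : Type*} [Field 𝔽] [IsAlgClosed 𝔽]
    (h2 : (2 : 𝔽) ≠ 0) (n : ℕ)
    (φ : Matrix (Fin n) (Fin n) 𝔽 → Matrix (Fin n) (Fin n) 𝔽)
    (hmaps : Set.MapsTo φ (symmRankOneIdempotents 𝔽 n) (symmRankOneIdempotents 𝔽 n))
    (htr : ∀ P ∈ symmRankOneIdempotents 𝔽 n, ∀ Q ∈ symmRankOneIdempotents 𝔽 n,
      (φ P * φ Q).trace = (P * Q).trace) :
    (∃ Φ : symmMatrices 𝔽 n →ₗ[𝔽] symmMatrices 𝔽 n,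
      ∀ (P : Matrix (Fin n) (Fin n) 𝔽) (hP : P ∈ symmRankOneIdempotents 𝔽 n),
        (Φ ⟨P, hP.1⟩ : Matrix (Fin n) (Fin n) 𝔽) = φ P) ∧
    (∀ (k m : ℕ) (P : Fin k → Matrix (Fin n) (Fin n) 𝔽)
        (Q : Fin m → Matrix (Fin n) (Fin n) 𝔽) (lam : Fin k → 𝔽) (mu : Fin m → 𝔽),
      (∀ i, P i ∈ symmRankOneIdempotents 𝔽 n) →
      (∀ j, Q j ∈ symmRankOneIdempotents 𝔽 n) →
      ∑ i, lam i • P i = ∑ j, mu j • Q j →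
      ∑ i, lam i • φ (P i) = ∑ j, mu j • φ (Q j)) := by
  classical
  open WignerAux in
  constructor
  · -- construct the linear map
    set S : Submodule 𝔽 (Matrix (Fin n) (Fin n) 𝔽) := symmMatrices 𝔽 n with hS
    set B' : (Fin n × Fin n) → S := fun p => ⟨bmat p.1 p.2, (bmat_mem h2 p.1 p.2).1⟩ with hB'
    set Bφ : (Fin n × Fin n) → S :=
      fun p => ⟨φ (bmat p.1 p.2), (hmaps (bmat_mem h2 p.1 p.2)).1⟩ with hBφ
    set u : ((Fin n × Fin n) → 𝔽) →ₗ[𝔽] S := Fintype.linearCombination 𝔽 B' with hu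
    set v : ((Fin n × Fin n) → 𝔽) →ₗ[𝔽] S := Fintype.linearCombination 𝔽 Bφ with hv
    have husurj : LinearMap.range u = ⊤ := by
      rw [hu, Fintype.range_linearCombination, Submodule.eq_top_iff']
      intro Y
      have hY1 : (Y : Matrix (Fin n) (Fin n) 𝔽)
          ∈ Submodule.span 𝔽 (Set.range fun p : Fin n × Fin n => bmat (𝔽 := 𝔽) p.1 p.2) :=
        symm_mem_span h2 _ Y.2
      have hle : Submodule.span 𝔽 (Set.range fun p : Fin n × Fin n => bmat (𝔽 := 𝔽) p.1 p.2)
          ≤ (Submodule.span 𝔽 (Set.range B')).map S.subtype := by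
        rw [Submodule.map_span]
        apply Submodule.span_mono
        rintro _ ⟨p, rfl⟩
        exact ⟨B' p, ⟨p, rfl⟩, rfl⟩
      obtain ⟨Z, hZ, hZY⟩ := hle hY1
      rwa [show Z = Y from Subtype.ext hZY] at hZ
    obtain ⟨sec, hsec⟩ := u.exists_rightInverse_of_surjective husurj
    refine ⟨v ∘ₗ sec, ?_⟩
    intro P hP
    set c : (Fin n × Fin n) → 𝔽 := sec ⟨P, hP.1⟩ with hcdef
    have huc : u c = ⟨P, hP.1⟩ := by
      have := congrFun (congrArg DFunLike.coe hsec) (⟨P, hP.1⟩ : S)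
      simpa using this
    have hucoe : ∑ p : Fin n × Fin n, c p • bmat (𝔽 := 𝔽) p.1 p.2 = P := by
      have h0 := congrArg Subtype.val huc
      rw [hu] at h0
      rw [Fintype.linearCombination_apply] at h0
      simpa [hB'] using h0
    -- relation: -P + ∑ c • bmat = 0
    have hrel := relation_preserved h2 φ hmaps htr
      (ι := Unit ⊕ (Fin n × Fin n))
      (Sum.elim (fun _ => P) (fun p => bmat p.1 p.2))
      (by rintro (j | p); exacts [hP, bmat_mem h2 p.1 p.2])
      (Sum.elim (fun _ => (-1 : 𝔽)) c)
      (by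
        rw [Fintype.sum_sum_type]
        simp only [Sum.elim_inl, Sum.elim_inr]
        rw [Finset.sum_const]
        simp only [Finset.card_univ, Fintype.card_unit, one_smul, neg_smul, one_nsmul]
        rw [hucoe]; exact neg_add_cancel P)
    rw [Fintype.sum_sum_type] at hrel
    simp only [Sum.elim_inl, Sum.elim_inr] at hrel
    rw [Finset.sum_const] at hrel
    simp only [Finset.card_univ, Fintype.card_unit, one_nsmul, neg_smul, one_smul] at hrel
    have hres : ∑ p : Fin n × Fin n, c p • φ (bmat (𝔽 := 𝔽) p.1 p.2) = φ P := by
      linear_combination (norm := abel) hrel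
    have : (v ∘ₗ sec) ⟨P, hP.1⟩ = v c := rfl
    rw [this]
    have h0 : ((v c : S) : Matrix (Fin n) (Fin n) 𝔽)
        = ∑ p : Fin n × Fin n, c p • φ (bmat (𝔽 := 𝔽) p.1 p.2) := by
      rw [hv, Fintype.linearCombination_apply]
      push_cast
      rfl
    rw [h0, hres]
  · intro k m P Q lam mu hP hQ heq
    have hrel := relation_preserved h2 φ hmaps htr
      (ι := Fin k ⊕ Fin m) (Sum.elim P Q)
      (by rintro (i | j); exacts [hP i, hQ j])
      (Sum.elim lam (fun j => -mu j))
      (by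
        rw [Fintype.sum_sum_type]
        simp only [Sum.elim_inl, Sum.elim_inr, neg_smul]
        rw [Finset.sum_neg_distrib, heq]
        exact add_neg_cancel _)
    rw [Fintype.sum_sum_type] at hrel
    simp only [Sum.elim_inl, Sum.elim_inr, neg_smul] at hrel
    rw [Finset.sum_neg_distrib] at hrel
    exact sub_eq_zero.mp (by linear_combination (norm := abel) hrel)
end
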